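/- arXiv:2409.11945 — 10 statements merged into one kernel-verified Lean document; each statement's English description precedes it below -/
import Mathlib

section
/- For the open unit interval I° = Set.Ioo (0:ℝ) 1, the subspace of the mapping space C(I°, I°) (with the compact-open topology) consisting of those continuous maps f : I° → I° that are monotone and are homotopy equivalences is a contractible topological space. -/
/-!
Every map into the contractible space `(0,1)` is homotopic to every other one, so every self-map
of `(0,1)` is a homotopy equivalence and the space in question is just the space of monotone
self-maps. Composing with the inclusion `(0,1) → ℝ` embeds it onto a convex subset of the
topological vector space `C((0,1), ℝ)`, which is contractible.
-/

open Topology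

namespace ContinuousMap

theorem homotopic_of_contractibleSpace {X Y : Type*} [TopologicalSpace X] [TopologicalSpace Y]
    [ContractibleSpace Y] (f g : C(X, Y)) : f.Homotopic g := by
  obtain ⟨y, hy⟩ := id_nullhomotopic Y
  have hconst : ∀ h : C(X, Y), h.Homotopic (const X y) := fun h => hy.comp (.refl h)
  exact (hconst f).trans (hconst g).symm

theorem exists_homotopy_inverse_of_contractibleSpace {Y : Type*} [TopologicalSpace Y]
    [ContractibleSpace Y] (f : C(Y, Y)) :
    ∃ g : C(Y, Y), (g.comp f).Homotopic (.id Y) ∧ (f.comp g).Homotopic (.id Y) :=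
  ⟨.id Y, homotopic_of_contractibleSpace _ _, homotopic_of_contractibleSpace _ _⟩

variable {X E : Type*} [TopologicalSpace X] [Preorder X]
  [AddCommGroup E] [PartialOrder E] [IsOrderedAddMonoid E] [Module ℝ E] [PosSMulMono ℝ E]
  [TopologicalSpace E] [IsTopologicalAddGroup E] [ContinuousSMul ℝ E]

theorem convex_setOf_monotone_mapsTo {s : Set E} (hs : Convex ℝ s) :
    Convex ℝ {g : C(X, E) | Monotone g ∧ ∀ x, g x ∈ s} := by
  rintro g ⟨hg, hgs⟩ h ⟨hh, hhs⟩ a b ha hb hab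
  exact ⟨(hg.const_smul ha).add (hh.const_smul hb), fun x => hs (hgs x) (hhs x) ha hb hab⟩

theorem _root_.Convex.contractibleSpace_monotone {s : Set E} (hs : Convex ℝ s) (f₀ : C(X, s))
    (hf₀ : Monotone f₀) : ContractibleSpace {f : C(X, s) // Monotone f} := by
  let φ : {f : C(X, s) // Monotone f} → C(X, E) := fun f => (mk Subtype.val).comp f.1
  have hφ : IsEmbedding φ :=
    (isEmbedding_postcomp _ IsEmbedding.subtypeVal).comp IsEmbedding.subtypeVal
  have hrange : Set.range φ = {g : C(X, E) | Monotone g ∧ ∀ x, g x ∈ s} := by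
    ext g
    constructor
    · rintro ⟨f, rfl⟩
      exact ⟨fun x y hxy => f.2 hxy, fun x => (f.1 x).2⟩
    · rintro ⟨hg, hgs⟩
      exact ⟨⟨⟨fun x => ⟨g x, hgs x⟩, g.continuous.subtype_mk hgs⟩, fun x y hxy => hg hxy⟩, rfl⟩
  have := (convex_setOf_monotone_mapsTo hs).contractibleSpace ⟨φ ⟨f₀, hf₀⟩, hrange ▸ ⟨_, rfl⟩⟩
  exact (hφ.toHomeomorph.trans (.setCongr hrange)).contractibleSpace

end ContinuousMap

open ContinuousMap

/-- The subspace of `C((0,1), (0,1))` (compact-open topology) consisting of the monotone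
homotopy equivalences is contractible. -/
theorem stmt_1 :
    ContractibleSpace
      {f : C(↥(Set.Ioo (0:ℝ) 1), ↥(Set.Ioo (0:ℝ) 1)) //
        Monotone ⇑f ∧
        ∃ g : C(↥(Set.Ioo (0:ℝ) 1), ↥(Set.Ioo (0:ℝ) 1)),
          (g.comp f).Homotopic (ContinuousMap.id _) ∧
          (f.comp g).Homotopic (ContinuousMap.id _)} := by
  have : ContractibleSpace (Set.Ioo (0:ℝ) 1) :=
    (convex_Ioo 0 1).contractibleSpace (Set.nonempty_Ioo.2 zero_lt_one)
  have := (convex_Ioo (0:ℝ) 1).contractibleSpace_monotone (.id _) monotone_id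
  exact (Homeomorph.subtype (.refl _) fun f =>
    and_iff_left (exists_homotopy_inverse_of_contractibleSpace f)).contractibleSpace
end

section
/- For all natural numbers n and m, the space E_Δ(n,m) is homotopy equivalent to the set of monotone maps Fin(n+1) → Fin(m+1) endowed with the discrete topology; that is, there exists a homotopy equivalence of topological spaces between E_Δ(n,m) and the discrete space Mon([n],[m]). -/
/-- The open unit interval. -/
abbrev IooSp : Type := ↥(Set.Ioo (0:ℝ) 1)

/-- The marked set `n̲ ⊆ (0,1)`, consisting of the points `(k+1)/(n+2)` for `0 ≤ k ≤ n`. -/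
def markedDelta (n : ℕ) : Set IooSp :=
  {x | ∃ k : Fin (n + 1), (x : ℝ) = (((k : ℕ) : ℝ) + 1) / ((n : ℝ) + 2)}

/-- The mapping space `Map_{Δ_Top}((I°,n̲),(I°,m̲))` of the topological simplex category:
monotone homotopy equivalences of the open interval preserving the marked points. -/
abbrev EDelta (n m : ℕ) : Type :=
  {f : C(IooSp, IooSp) //
    Monotone ⇑f ∧
    (∃ g : C(IooSp, IooSp),
      (g.comp f).Homotopic (ContinuousMap.id _) ∧
      (f.comp g).Homotopic (ContinuousMap.id _)) ∧
    ∀ x ∈ markedDelta n, f x ∈ markedDelta m}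

/-!
A map `f ∈ E_Δ(n,m)` sends the marked point `(k+1)/(n+2)` to some `(φ k + 1)/(m+2)`, and `φ` is
monotone. Since marked points are `1/(m+2)` apart, `f ↦ φ` is locally constant, hence continuous
into the discrete space. Conversely, the piecewise linear interpolation of the nodes
`j/(n+2) ↦ (φ (j-1) + 1)/(m+2)` (with `0 ↦ 0`, `1 ↦ 1`) is a section. The straight-line homotopy
from the section of `φ_f` to `f` stays in `E_Δ(n,m)`: convex combinations preserve monotonicity,
the two ends agree on marked points, and since `(0,1)` is contractible every self-map of it is a
homotopy equivalence.
-/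

theorem ContinuousMap.homotopic_of_contractibleSpace_s2 {X Y : Type*} [TopologicalSpace X]
    [TopologicalSpace Y] [ContractibleSpace Y] (f g : C(X, Y)) : f.Homotopic g := by
  obtain ⟨y, hy⟩ := id_nullhomotopic Y
  have h : ∀ f : C(X, Y), f.Homotopic (const X y) := fun f => by
    simpa using hy.comp (Homotopic.refl f)
  exact (h f).trans (h g).symm

theorem ContinuousMap.exists_homotopyInverse_of_contractibleSpace {X : Type*}
    [TopologicalSpace X] [ContractibleSpace X] (f : C(X, X)) :
    ∃ g : C(X, X),
      (g.comp f).Homotopic (ContinuousMap.id X) ∧ (f.comp g).Homotopic (ContinuousMap.id X) :=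
  ⟨ContinuousMap.id X, homotopic_of_contractibleSpace_s2 _ _, homotopic_of_contractibleSpace_s2 _ _⟩

namespace IooSp

instance : ContractibleSpace IooSp := (convex_Ioo 0 1).contractibleSpace ⟨1 / 2, by norm_num⟩

instance : LocallyCompactSpace IooSp := isOpen_Ioo.locallyCompactSpace

end IooSp

section Segment

variable {X : Type*} [TopologicalSpace X]

noncomputable def segmentMap (t : unitInterval) (g f : C(X, IooSp)) : C(X, IooSp) where
  toFun x := ⟨(1 - t) * g x + t * f x,
    convex_Ioo (0:ℝ) 1 (g x).2 (f x).2 (sub_nonneg.2 t.2.2) t.2.1 (sub_add_cancel 1 _)⟩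

@[simp]
theorem coe_segmentMap_apply (t : unitInterval) (g f : C(X, IooSp)) (x : X) :
    (segmentMap t g f x : ℝ) = (1 - t) * g x + t * f x := rfl

@[simp]
theorem segmentMap_zero (g f : C(X, IooSp)) : segmentMap 0 g f = g := by
  ext; simp

@[simp]
theorem segmentMap_one (g f : C(X, IooSp)) : segmentMap 1 g f = f := by
  ext; simp

theorem segmentMap_apply_of_eq (t : unitInterval) {g f : C(X, IooSp)} {x : X} (h : g x = f x) :
    segmentMap t g f x = f x := by
  ext
  simp only [coe_segmentMap_apply, h]
  ring

theorem monotone_segmentMap [Preorder X] (t : unitInterval) {g f : C(X, IooSp)}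
    (hg : Monotone g) (hf : Monotone f) : Monotone (segmentMap t g f) := fun x y hxy => by
  have hg' : (g x : ℝ) ≤ g y := hg hxy
  have hf' : (f x : ℝ) ≤ f y := hf hxy
  show (1 - t) * (g x : ℝ) + t * f x ≤ (1 - t) * g y + t * f y
  gcongr
  · exact sub_nonneg.2 t.2.2
  · exact t.2.1

theorem continuous_segmentMap [LocallyCompactSpace X] :
    Continuous fun p : unitInterval × C(X, IooSp) × C(X, IooSp) =>
      segmentMap p.1 p.2.1 p.2.2 := by
  refine ContinuousMap.continuous_of_continuous_uncurry _ ?_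
  refine Continuous.subtype_mk ?_ _
  fun_prop

end Segment

section PiecewiseLinear

open Finset

noncomputable def ramp (t : ℝ) : ℝ := max 0 (min 1 t)

theorem continuous_ramp : Continuous ramp := by unfold ramp; fun_prop

theorem monotone_ramp : Monotone ramp := fun _ _ h => max_le_max le_rfl (min_le_min le_rfl h)

theorem ramp_nonneg (t : ℝ) : 0 ≤ ramp t := le_max_left _ _

theorem ramp_le_one (t : ℝ) : ramp t ≤ 1 := max_le zero_le_one (min_le_left _ _)

theorem ramp_pos {t : ℝ} (h : 0 < t) : 0 < ramp t := lt_max_of_lt_right (lt_min one_pos h)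

theorem ramp_lt_one {t : ℝ} (h : t < 1) : ramp t < 1 := max_lt one_pos (min_lt_of_right_lt h)

theorem ramp_of_nonpos {t : ℝ} (h : t ≤ 0) : ramp t = 0 := by
  rw [ramp, min_eq_right (h.trans zero_le_one), max_eq_left h]

theorem ramp_of_one_le {t : ℝ} (h : 1 ≤ t) : ramp t = 1 := by
  rw [ramp, min_eq_left h, max_eq_right zero_le_one]

/-- The piecewise linear function on `[0, N]` with value `y j` at each integer `j ≤ N`,
extended constantly outside `[0, N]`. -/
noncomputable def plInterp (y : ℕ → ℝ) (N : ℕ) (t : ℝ) : ℝ :=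
  y 0 + ∑ j ∈ range N, (y (j + 1) - y j) * ramp (t - j)

variable {y : ℕ → ℝ} {N : ℕ}

theorem continuous_plInterp (y : ℕ → ℝ) (N : ℕ) : Continuous (plInterp y N) := by
  unfold plInterp
  have := continuous_ramp
  fun_prop

theorem monotone_plInterp (hy : Monotone y) : Monotone (plInterp y N) := fun s t hst => by
  unfold plInterp
  gcongr with j
  · exact sub_nonneg.2 (hy j.le_succ)
  · exact monotone_ramp (by linarith)

theorem plInterp_natCast {k : ℕ} (hk : k ≤ N) : plInterp y N k = y k := by
  obtain ⟨r, rfl⟩ := Nat.exists_eq_add_of_le hk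
  have below : ∀ j ∈ range k, (y (j + 1) - y j) * ramp (k - j) = y (j + 1) - y j := by
    intro j hj
    have : (j : ℝ) + 1 ≤ k := by exact_mod_cast mem_range.1 hj
    rw [ramp_of_one_le (by linarith), mul_one]
  have above : ∀ i ∈ range r, (y (k + i + 1) - y (k + i)) * ramp (k - (k + i : ℕ)) = 0 := by
    intro i _
    rw [ramp_of_nonpos (by push_cast; linarith [(i.cast_nonneg : (0:ℝ) ≤ i)]), mul_zero]
  rw [plInterp, sum_range_add, sum_congr rfl below, sum_congr rfl above, sum_range_sub,
    sum_const_zero]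
  ring

theorem lt_plInterp (hy : Monotone y) (h01 : y 0 < y 1) (hN : 0 < N) {t : ℝ} (ht : 0 < t) :
    y 0 < plInterp y N t := by
  have hterm : 0 < (y 1 - y 0) * ramp (t - 0) := mul_pos (sub_pos.2 h01) (ramp_pos (by simpa))
  have hle := single_le_sum (f := fun j : ℕ => (y (j + 1) - y j) * ramp (t - j))
    (fun j _ => mul_nonneg (sub_nonneg.2 (hy j.le_succ)) (ramp_nonneg _)) (mem_range.2 hN)
  simp only [Nat.cast_zero, zero_add] at hle
  unfold plInterp
  linarith

theorem plInterp_lt (hy : Monotone y) (hN : y N < y (N + 1)) {t : ℝ} (ht : t < N + 1) :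
    plInterp y (N + 1) t < y (N + 1) := by
  have hsum : ∑ j ∈ range (N + 1), (y (j + 1) - y j) * ramp (t - j)
      < ∑ j ∈ range (N + 1), (y (j + 1) - y j) := by
    refine sum_lt_sum (fun j _ => mul_le_of_le_one_right (sub_nonneg.2 (hy j.le_succ))
      (ramp_le_one _)) ⟨N, self_mem_range_succ N, ?_⟩
    exact mul_lt_of_lt_one_right (sub_pos.2 hN) (ramp_lt_one (by linarith))
  rw [sum_range_sub] at hsum
  unfold plInterp
  linarith

end PiecewiseLinear

section MarkedPoints

theorem markedPt_mem_Ioo (n : ℕ) (k : Fin (n + 1)) :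
    ((k : ℝ) + 1) / (n + 2) ∈ Set.Ioo (0:ℝ) 1 := by
  have hk : (k : ℝ) < n + 1 := by exact_mod_cast k.2
  constructor
  · positivity
  · rw [div_lt_one (by positivity)]; linarith

noncomputable def markedPt (n : ℕ) (k : Fin (n + 1)) : IooSp :=
  ⟨((k : ℝ) + 1) / (n + 2), markedPt_mem_Ioo n k⟩

theorem markedPt_mem (n : ℕ) (k : Fin (n + 1)) : markedPt n k ∈ markedDelta n := ⟨k, rfl⟩

theorem strictMono_markedPt (n : ℕ) : StrictMono (markedPt n) := fun j k h => by
  show ((j : ℝ) + 1) / (n + 2) < ((k : ℝ) + 1) / (n + 2)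
  gcongr
  exact_mod_cast h

theorem eq_of_dist_markedPt_lt {m : ℕ} {j k : Fin (m + 1)}
    (h : dist (markedPt m j) (markedPt m k) < 1 / (m + 2)) : j = k := by
  by_contra hjk
  have hsep : (1:ℝ) ≤ |(j : ℝ) - k| := by
    exact_mod_cast Int.one_le_abs (sub_ne_zero.2 (Int.ofNat_inj.not.2 (Fin.val_ne_of_ne hjk)))
  rw [Subtype.dist_eq, Real.dist_eq, markedPt, markedPt, ← sub_div, add_sub_add_right_eq_sub,
    abs_div, abs_of_pos (by positivity : (0:ℝ) < m + 2)] at h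
  have := div_le_div_of_nonneg_right hsep (by positivity : (0:ℝ) ≤ m + 2)
  linarith

end MarkedPoints

section SectionOfMonotone

variable {n m : ℕ}

/-- The values, in units of `1/(m+2)`, of the section of `φ` at the nodes `j/(n+2)`. -/
def padEnds (φ : Fin (n + 1) → Fin (m + 1)) (j : ℕ) : ℕ :=
  if j = 0 then 0 else if h : j ≤ n + 1 then φ ⟨j - 1, by omega⟩ + 1 else m + 2

theorem padEnds_zero (φ : Fin (n + 1) → Fin (m + 1)) : padEnds φ 0 = 0 := rfl

theorem padEnds_succ (φ : Fin (n + 1) → Fin (m + 1)) {k : ℕ} (hk : k < n + 1) :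
    padEnds φ (k + 1) = φ ⟨k, hk⟩ + 1 := by
  simp [padEnds, show k ≤ n by omega]

theorem padEnds_of_lt (φ : Fin (n + 1) → Fin (m + 1)) {j : ℕ} (hj : n + 1 < j) :
    padEnds φ j = m + 2 := by
  simp [padEnds, show j ≠ 0 by omega, show ¬j ≤ n + 1 by omega]

theorem monotone_padEnds {φ : Fin (n + 1) → Fin (m + 1)} (hφ : Monotone φ) :
    Monotone (padEnds φ) := by
  refine monotone_nat_of_le_succ fun j => ?_
  rcases j with _ | k
  · exact Nat.zero_le _
  rcases Nat.lt_or_ge k n with hk | hk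
  · rw [padEnds_succ φ (by omega : k < n + 1), padEnds_succ φ (by omega : k + 1 < n + 1)]
    exact Nat.succ_le_succ (hφ (Fin.mk_le_mk.2 k.le_succ))
  rw [padEnds_of_lt φ (by omega : n + 1 < k + 1 + 1)]
  rcases hk.eq_or_lt with rfl | hk
  · rw [padEnds_succ φ n.lt_succ_self]
    have := (φ ⟨n, n.lt_succ_self⟩).2
    omega
  · rw [padEnds_of_lt φ (by omega)]

variable {φ : Fin (n + 1) → Fin (m + 1)}

theorem monotone_padEnds_div (hφ : Monotone φ) :
    Monotone fun j => (padEnds φ j : ℝ) / ((m : ℝ) + 2) := fun _ _ h =>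
  div_le_div_of_nonneg_right (by exact_mod_cast monotone_padEnds hφ h) (by positivity)

noncomputable def sectionFun (φ : Fin (n + 1) → Fin (m + 1)) (x : ℝ) : ℝ :=
  plInterp (fun j => padEnds φ j / ((m : ℝ) + 2)) (n + 2) ((n + 2) * x)

theorem sectionFun_markedPt (φ : Fin (n + 1) → Fin (m + 1)) (k : Fin (n + 1)) :
    sectionFun φ (markedPt n k) = markedPt m (φ k) := by
  have hk : (n + 2) * (markedPt n k : ℝ) = ((k + 1 : ℕ) : ℝ) := by
    simp only [markedPt]; push_cast; field_simp
  rw [sectionFun, hk, plInterp_natCast (by omega), padEnds_succ φ k.2]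
  simp [markedPt]

theorem sectionFun_mem_Ioo (hφ : Monotone φ) {x : ℝ} (hx : x ∈ Set.Ioo (0:ℝ) 1) :
    sectionFun φ x ∈ Set.Ioo (0:ℝ) 1 := by
  have hy := monotone_padEnds_div hφ
  have hm : (0:ℝ) < m + 2 := by positivity
  have h0 : (padEnds φ 0 : ℝ) / (m + 2) = 0 := by simp [padEnds_zero]
  have h1 : 0 < (padEnds φ 1 : ℝ) / (m + 2) := by
    rw [padEnds_succ φ (Nat.succ_pos n)]; positivity
  have htop : (padEnds φ (n + 1 + 1) : ℝ) / (m + 2) = 1 := by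
    rw [padEnds_of_lt φ (by omega)]; push_cast; exact div_self hm.ne'
  have hlast : (padEnds φ (n + 1) : ℝ) / (m + 2) < 1 := by
    rw [padEnds_succ φ n.lt_succ_self, div_lt_one hm]
    exact_mod_cast (show (φ ⟨n, _⟩ : ℕ) + 1 < m + 2 by omega)
  obtain ⟨hx0, hx1⟩ := hx
  constructor
  · simpa [sectionFun, h0] using
      lt_plInterp hy (h0 ▸ h1) (by omega : 0 < n + 2) (by positivity : 0 < ((n:ℝ) + 2) * x)
  · have h := plInterp_lt hy (htop ▸ hlast)
      (by push_cast; nlinarith : ((n:ℝ) + 2) * x < (n + 1 : ℕ) + 1)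
    rwa [htop] at h

noncomputable def sectionMap (hφ : Monotone φ) : C(IooSp, IooSp) :=
  ⟨fun x => ⟨sectionFun φ x, sectionFun_mem_Ioo hφ x.2⟩,
    ((continuous_plInterp _ _).comp (continuous_const.mul continuous_subtype_val)).subtype_mk _⟩

theorem monotone_sectionMap (hφ : Monotone φ) : Monotone (sectionMap hφ) := fun _ _ hxy =>
  monotone_plInterp (monotone_padEnds_div hφ) (mul_le_mul_of_nonneg_left hxy (by positivity))

theorem sectionMap_markedPt (hφ : Monotone φ) (k : Fin (n + 1)) :
    sectionMap hφ (markedPt n k) = markedPt m (φ k) :=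
  Subtype.ext (sectionFun_markedPt φ k)

end SectionOfMonotone

namespace EDelta

open Filter Topology

variable {n m : ℕ}

noncomputable def ofMonotone (φ : Fin (n + 1) → Fin (m + 1)) (hφ : Monotone φ) : EDelta n m :=
  ⟨sectionMap hφ, monotone_sectionMap hφ,
    ContinuousMap.exists_homotopyInverse_of_contractibleSpace _,
    by
      rintro x ⟨k, hk⟩
      obtain rfl : x = markedPt n k := Subtype.ext hk
      exact sectionMap_markedPt hφ k ▸ markedPt_mem m (φ k)⟩

noncomputable def vertexMap (f : EDelta n m) (k : Fin (n + 1)) : Fin (m + 1) :=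
  (f.2.2.2 _ (markedPt_mem n k)).choose

theorem apply_markedPt (f : EDelta n m) (k : Fin (n + 1)) :
    f.1 (markedPt n k) = markedPt m (f.vertexMap k) :=
  Subtype.ext (f.2.2.2 _ (markedPt_mem n k)).choose_spec

theorem monotone_vertexMap (f : EDelta n m) : Monotone f.vertexMap := fun j k h => by
  rw [← (strictMono_markedPt m).le_iff_le, ← apply_markedPt, ← apply_markedPt]
  exact f.2.1 ((strictMono_markedPt n).monotone h)

theorem vertexMap_ofMonotone {φ : Fin (n + 1) → Fin (m + 1)} (hφ : Monotone φ) :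
    (ofMonotone φ hφ).vertexMap = φ :=
  funext fun k => (strictMono_markedPt m).injective <| by
    rw [← apply_markedPt]; exact sectionMap_markedPt hφ k

noncomputable def toMon (f : EDelta n m) : {φ : Fin (n + 1) → Fin (m + 1) // Monotone φ} :=
  ⟨f.vertexMap, f.monotone_vertexMap⟩

theorem isLocallyConstant_toMon : IsLocallyConstant (toMon : EDelta n m → _) := by
  rw [IsLocallyConstant.iff_eventually_eq]
  intro f
  have hclose : ∀ᶠ g in 𝓝 f, ∀ k,
      dist (g.1 (markedPt n k)) (f.1 (markedPt n k)) < 1 / ((m : ℝ) + 2) :=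
    eventually_all.2 fun k =>
      ((continuous_eval_const _).comp continuous_subtype_val).continuousAt.eventually
        (Metric.ball_mem_nhds _ (by positivity))
  filter_upwards [hclose] with g hg
  refine Subtype.ext (funext fun k => eq_of_dist_markedPt_lt ?_)
  have := hg k
  rwa [apply_markedPt, apply_markedPt] at this

noncomputable def segment (t : unitInterval) (g f : EDelta n m)
    (h : ∀ k, g.1 (markedPt n k) = f.1 (markedPt n k)) : EDelta n m :=
  ⟨segmentMap t g.1 f.1, monotone_segmentMap t g.2.1 f.2.1,
    ContinuousMap.exists_homotopyInverse_of_contractibleSpace _,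
    by
      rintro x ⟨k, hk⟩
      obtain rfl : x = markedPt n k := Subtype.ext hk
      rw [segmentMap_apply_of_eq t (h k)]
      exact f.2.2.2 _ (markedPt_mem n k)⟩

variable (n m) in
noncomputable def retraction : C(EDelta n m, EDelta n m) :=
  ⟨fun f => ofMonotone (toMon f).1 (toMon f).2,
    (isLocallyConstant_toMon.comp fun φ => ofMonotone φ.1 φ.2).continuous⟩

theorem retraction_apply_markedPt (f : EDelta n m) (k : Fin (n + 1)) :
    (retraction n m f).1 (markedPt n k) = f.1 (markedPt n k) :=
  (sectionMap_markedPt f.monotone_vertexMap k).trans (apply_markedPt f k).symm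

theorem retraction_homotopic_id : (retraction n m).Homotopic (ContinuousMap.id _) :=
  ⟨{ toFun := fun p => segment p.1 (retraction n m p.2) p.2 (retraction_apply_markedPt p.2)
     continuous_toFun := (continuous_segmentMap.comp (continuous_fst.prodMk
       ((continuous_subtype_val.comp ((retraction n m).continuous.comp continuous_snd)).prodMk
         (continuous_subtype_val.comp continuous_snd)))).subtype_mk _
     map_zero_left := fun _ => Subtype.ext (segmentMap_zero _ _)
     map_one_left := fun _ => Subtype.ext (segmentMap_one _ _) }⟩

end EDelta

/-- `Map_{Δ_Top}((I°,n̲),(I°,m̲))` is homotopy equivalent to the discrete space of monotone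
maps `[n] → [m]`. -/
theorem stmt_2 (n m : ℕ) :
    letI : TopologicalSpace {φ : Fin (n + 1) → Fin (m + 1) // Monotone φ} := ⊥
    Nonempty
      (ContinuousMap.HomotopyEquiv (EDelta n m)
        {φ : Fin (n + 1) → Fin (m + 1) // Monotone φ}) := by
  let : TopologicalSpace {φ : Fin (n + 1) → Fin (m + 1) // Monotone φ} := ⊥
  refine ⟨⟨⟨EDelta.toMon, EDelta.isLocallyConstant_toMon.continuous⟩,
    ⟨fun φ => EDelta.ofMonotone φ.1 φ.2, continuous_bot⟩, EDelta.retraction_homotopic_id, ?_⟩⟩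
  convert ContinuousMap.Homotopic.refl _
  exact ContinuousMap.ext fun φ => Subtype.ext (EDelta.vertexMap_ofMonotone φ.2).symm
end

section
/- For all natural numbers n and m, every path component of the space E(n,m) is contractible; that is, the mapping spaces of the topological cyclic category are homotopy discrete. -/
/-- The circle `T = ℝ/ℤ`. -/
abbrev Circ : Type := AddCircle (1 : ℝ)

/-- `F : ℝ → ℝ` is a lift of `f : T → T` witnessing that `f` is a monotone degree-one map. -/
def IsLift (f : C(Circ, Circ)) (F : ℝ → ℝ) : Prop :=
  Continuous F ∧ Monotone F ∧ (∀ x : ℝ, F (x + 1) = F x + 1) ∧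
    ∀ x : ℝ, f (x : Circ) = ((F x : ℝ) : Circ)

/-- The marked set `n̲ ⊆ T`, the image of `(1/(n+1))·ℤ`. -/
def markedCirc (n : ℕ) : Set Circ :=
  {x | ∃ k : ℤ, x = (((k : ℝ) / ((n : ℝ) + 1) : ℝ) : Circ)}

/-- The mapping space `Map_{Λ_Top}(⟨n⟩,⟨m⟩)` of the topological cyclic category:
monotone degree-one maps of the circle preserving the marked points. -/
abbrev ECirc (n m : ℕ) : Type :=
  {f : C(Circ, Circ) //
    (∃ F : ℝ → ℝ, IsLift f F) ∧ ∀ x ∈ markedCirc n, f x ∈ markedCirc m}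


/-!
Fix `f` with a lift `F`. Evaluation at a marked point is continuous with values in the finite
set `m̲`, so it is constant on the path component of `f`; in particular every `g` there has a
lift `G` with `G 0 = F 0`. Lifts of uniformly close maps agreeing at `0` are uniformly close, so
`G` depends continuously on `g`; at a marked point `x` it takes values in `F x + (m + 1)⁻¹ ℤ`,
hence `G x = F x`. The straight-line homotopy `(1 - t) G + t F` therefore stays among monotone
degree-one lifts preserving the marked points, and descends to a contraction of the path
component onto `f`.
-/

open Set
open scoped unitInterval

namespace Circ

theorem coe_eq_coe_iff {a b : ℝ} : (a : Circ) = b ↔ ∃ k : ℤ, a - b = k := by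
  rw [QuotientAddGroup.eq]
  constructor
  · rintro ⟨k, hk⟩
    simp only [zsmul_eq_mul, mul_one] at hk
    exact ⟨-k, by push_cast; linarith⟩
  · rintro ⟨k, hk⟩
    exact ⟨-k, by simp only [zsmul_eq_mul, mul_one]; push_cast; linarith⟩

theorem dist_coe_le (a b : ℝ) : dist (a : Circ) b ≤ |a - b| := by
  rw [dist_eq_norm, ← AddCircle.coe_sub, UnitAddCircle.norm_eq]
  simpa using round_le (a - b) 0

theorem dist_coe_eq {a b : ℝ} (h : |a - b| ≤ 1 / 2) : dist (a : Circ) b = |a - b| := by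
  rw [dist_eq_norm, ← AddCircle.coe_sub, AddCircle.norm_coe_eq_abs_iff (p := (1 : ℝ)) one_ne_zero]
  simpa using h

end Circ

section DegreeOne

variable {F G : ℝ → ℝ}

theorem map_add_intCast_of_map_add_one (hp : ∀ x, F (x + 1) = F x + 1) (x : ℝ) (k : ℤ) :
    F (x + k) = F x + k := by
  have hper : Function.Periodic (fun y => F y - y) 1 := fun y => by simp only [hp]; ring
  have := hper.int_mul k x
  simp only [mul_one] at this
  linarith

theorem abs_sub_le_one_of_monotone (hFm : Monotone F) (hFp : ∀ x, F (x + 1) = F x + 1)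
    (hGm : Monotone G) (hGp : ∀ x, G (x + 1) = G x + 1) (h0 : F 0 = G 0) (x : ℝ) :
    |F x - G x| ≤ 1 := by
  have hF := map_add_intCast_of_map_add_one hFp 0 ⌊x⌋
  have hG := map_add_intCast_of_map_add_one hGp 0 ⌊x⌋
  rw [zero_add] at hF hG
  have hF₁ := hFm (Int.floor_le x)
  have hF₂ := hFm (Int.lt_floor_add_one x).le
  have hG₁ := hGm (Int.floor_le x)
  have hG₂ := hGm (Int.lt_floor_add_one x).le
  rw [hFp] at hF₂
  rw [hGp] at hG₂
  rw [abs_le]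
  constructor <;> linarith

end DegreeOne

def descendLift (F : ℝ → ℝ) (hc : Continuous F) (hp : ∀ x, F (x + 1) = F x + 1) :
    C(Circ, Circ) where
  toFun := Function.Periodic.lift (f := fun x => (F x : Circ)) (c := 1) fun x => by
    simp only [hp, AddCircle.coe_add_period]
  continuous_toFun := by
    rw [(QuotientAddGroup.isQuotientMap_mk _).continuous_iff]
    exact continuous_quotient_mk'.comp hc

theorem descendLift_coe (F : ℝ → ℝ) (hc : Continuous F) (hp : ∀ x, F (x + 1) = F x + 1) (x : ℝ) :
    descendLift F hc hp x = F x :=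
  rfl

theorem isLift_descendLift {F : ℝ → ℝ} (hc : Continuous F) (hm : Monotone F)
    (hp : ∀ x, F (x + 1) = F x + 1) : IsLift (descendLift F hc hp) F :=
  ⟨hc, hm, hp, fun _ => rfl⟩

namespace IsLift

variable {f g : C(Circ, Circ)} {F G : ℝ → ℝ}

theorem sub_mem_range_intCast (hF : IsLift f F) (hG : IsLift f G) (x : ℝ) :
    F x - G x ∈ range ((↑) : ℤ → ℝ) := by
  obtain ⟨k, hk⟩ := Circ.coe_eq_coe_iff.mp ((hF.2.2.2 x).symm.trans (hG.2.2.2 x))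
  exact ⟨k, hk.symm⟩

theorem eq_of_apply_zero_eq (hF : IsLift f F) (hG : IsLift f G) (h0 : F 0 = G 0) : F = G := by
  funext x
  have := isPreconnected_univ.constant_of_mapsTo
    Int.isClosedEmbedding_coe_real.isInducing.isDiscrete_range (hF.1.sub hG.1).continuousOn
    (fun y _ => hF.sub_mem_range_intCast hG y) (mem_univ x) (mem_univ 0)
  rw [Pi.sub_apply, Pi.sub_apply, h0, sub_self] at this
  linarith

theorem dist_le (hF : IsLift f F) (hG : IsLift g G) {ε : ℝ} (h : ∀ x, |F x - G x| ≤ ε) :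
    dist f g ≤ ε := by
  rw [ContinuousMap.dist_le ((abs_nonneg _).trans (h 0))]
  intro q
  obtain ⟨x, rfl⟩ := QuotientAddGroup.mk_surjective q
  rw [hF.2.2.2, hG.2.2.2]
  exact (Circ.dist_coe_le _ _).trans (h x)

/-- Where `|F - G| < 1/2` the circle distance of the images is `|F - G|`, so `{|F - G| ≤ ε}` is
clopen. -/
theorem abs_sub_le_of_dist_le (hF : IsLift f F) (hG : IsLift g G) (h0 : F 0 = G 0) {ε : ℝ}
    (hε : ε < 1 / 2) (hd : ∀ q, dist (f q) (g q) ≤ ε) (x : ℝ) : |F x - G x| ≤ ε := by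
  have hD : Continuous fun y => |F y - G y| := (hF.1.sub hG.1).abs
  have hclopen : IsClopen {y | |F y - G y| ≤ ε} := by
    refine ⟨isClosed_le hD continuous_const, ?_⟩
    convert isOpen_lt hD (continuous_const (y := (1 / 2 : ℝ))) using 1
    ext y
    refine ⟨fun hy => hy.trans_lt hε, fun hy => ?_⟩
    have := hd y
    rwa [hF.2.2.2, hG.2.2.2, Circ.dist_coe_eq hy.le] at this
  have h0mem : (0 : ℝ) ∈ {y | |F y - G y| ≤ ε} := by
    simpa [h0] using dist_nonneg.trans (hd 0)
  have hx : x ∈ {y | |F y - G y| ≤ ε} := hclopen.eq_univ ⟨0, h0mem⟩ ▸ mem_univ x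
  exact hx

theorem interpolate (hG : IsLift g G) (hF : IsLift f F) (t : I) :
    IsLift (descendLift (fun x => (1 - t) * G x + t * F x)
      ((continuous_const.mul hG.1).add (continuous_const.mul hF.1))
      (fun x => by rw [hF.2.2.1, hG.2.2.1]; ring))
      (fun x => (1 - t) * G x + t * F x) := by
  refine isLift_descendLift _ (fun a b hab => ?_) _
  have h1 := mul_le_mul_of_nonneg_left (hG.2.1 hab) (unitInterval.one_minus_nonneg t)
  have h2 := mul_le_mul_of_nonneg_left (hF.2.1 hab) t.2.1
  linarith

end IsLift

section LiftNear

variable {g g' : C(Circ, Circ)} (hg : ∃ G, IsLift g G) (hg' : ∃ G, IsLift g' G) (c : ℝ)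

/-- The lift of `g` whose value at `0` is the representative of `g 0` closest to `c`. -/
noncomputable def liftNear : ℝ → ℝ :=
  fun x => hg.choose x - round (hg.choose 0 - c)

theorem isLift_liftNear : IsLift g (liftNear hg c) := by
  obtain ⟨hc, hm, hp, hcompat⟩ := hg.choose_spec
  refine ⟨hc.sub continuous_const, fun a b hab => sub_le_sub_right (hm hab) _, fun x => ?_,
    fun x => ?_⟩
  · simp only [liftNear, hp]
    ring
  · rw [hcompat x]
    exact Circ.coe_eq_coe_iff.mpr ⟨round (hg.choose 0 - c), by simp only [liftNear]; ring⟩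

variable {hg hg' c}

theorem liftNear_zero (h : g 0 = c) : liftNear hg c 0 = c := by
  obtain ⟨k, hk⟩ := Circ.coe_eq_coe_iff.mp ((hg.choose_spec.2.2.2 0).symm.trans
    (by simpa using h))
  simp only [liftNear, hk, round_intCast]
  linarith

theorem IsLift.liftNear_eq {F : ℝ → ℝ} (hF : IsLift g F) : liftNear hg (F 0) = F :=
  (isLift_liftNear hg _).eq_of_apply_zero_eq hF (liftNear_zero (by simpa using hF.2.2.2 0))

theorem abs_liftNear_sub_le (h : g 0 = c) (h' : g' 0 = c) (hd : dist g g' < 1 / 2) (x : ℝ) :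
    |liftNear hg c x - liftNear hg' c x| ≤ dist g g' :=
  (isLift_liftNear hg c).abs_sub_le_of_dist_le (isLift_liftNear hg' c)
    ((liftNear_zero h).trans (liftNear_zero h').symm) hd
    (fun q => ContinuousMap.dist_apply_le_dist q) x

end LiftNear

theorem coe_mem_markedCirc_iff {m : ℕ} {r : ℝ} :
    (r : Circ) ∈ markedCirc m ↔ ∃ a : ℤ, ((m : ℝ) + 1) * r = a := by
  have hm : (m : ℝ) + 1 ≠ 0 := by positivity
  constructor
  · rintro ⟨j, hj⟩
    obtain ⟨l, hl⟩ := Circ.coe_eq_coe_iff.mp hj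
    refine ⟨j + ((m : ℤ) + 1) * l, ?_⟩
    rw [show r = j / ((m : ℝ) + 1) + l by linarith]
    push_cast
    field_simp
  · rintro ⟨a, ha⟩
    exact ⟨a, by rw [← ha]; field_simp⟩

theorem markedCirc_subset_torsion (m : ℕ) : markedCirc m ⊆ {u | (m + 1) • u = 0} := by
  rintro _ ⟨k, rfl⟩
  rw [mem_ofPred_eq, ← AddCircle.coe_nsmul, AddCircle.coe_eq_zero_iff]
  refine ⟨k, ?_⟩
  rw [zsmul_one, nsmul_eq_mul]
  push_cast
  field_simp

theorem markedCirc_finite (m : ℕ) : (markedCirc m).Finite :=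
  (AddCircle.finite_torsion 1 m.succ_pos).subset (markedCirc_subset_torsion m)

theorem zero_mem_markedCirc (n : ℕ) : (0 : Circ) ∈ markedCirc n :=
  ⟨0, by simp⟩

namespace ECirc

variable {n m : ℕ}

theorem apply_eq_of_mem_pathComponent {f g : ECirc n m} (hg : g ∈ pathComponent f) {x : Circ}
    (hx : x ∈ markedCirc n) : g.1 x = f.1 x :=
  isPathConnected_pathComponent.isConnected.isPreconnected.constant_of_mapsTo
    (markedCirc_finite m).isDiscrete
    ((continuous_eval_const x).comp continuous_subtype_val).continuousOn
    (fun g _ => g.2.2 x hx) hg (mem_pathComponent_self f)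

theorem apply_zero_eq_of_mem_pathComponent {f g : ECirc n m} {F : ℝ → ℝ} (hF : IsLift f.1 F)
    (hg : g ∈ pathComponent f) : g.1 0 = F 0 :=
  (apply_eq_of_mem_pathComponent hg (zero_mem_markedCirc n)).trans (by simpa using hF.2.2.2 0)

theorem continuousOn_liftNear_apply (c x : ℝ) :
    ContinuousOn (fun g : ECirc n m => liftNear g.2.1 c x) {g | g.1 0 = c} := by
  rw [Metric.continuousOn_iff]
  intro g hg ε hε
  refine ⟨min ε (1 / 2), by positivity, fun g' hg' hd => ?_⟩
  rw [Real.dist_eq]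
  calc |liftNear g'.2.1 c x - liftNear g.2.1 c x| ≤ dist g' g :=
        abs_liftNear_sub_le hg' hg (hd.trans_le (min_le_right _ _)) x
    _ < ε := hd.trans_le (min_le_left _ _)

theorem liftNear_eq_of_mem_pathComponent {f g : ECirc n m} {F : ℝ → ℝ} (hF : IsLift f.1 F)
    (hg : g ∈ pathComponent f) {x : ℝ} (hx : (x : Circ) ∈ markedCirc n) :
    liftNear g.2.1 (F 0) x = F x := by
  have hS : pathComponent f ⊆ {g : ECirc n m | g.1 0 = F 0} := fun _ hg =>
    apply_zero_eq_of_mem_pathComponent hF hg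
  have hmaps : MapsTo (fun g : ECirc n m => ((m : ℝ) + 1) * (liftNear g.2.1 (F 0) x - F x))
      (pathComponent f) (range ((↑) : ℤ → ℝ)) := by
    intro g _
    obtain ⟨a, ha⟩ := coe_mem_markedCirc_iff.mp
      ((isLift_liftNear g.2.1 (F 0)).2.2.2 x ▸ g.2.2 _ hx)
    obtain ⟨b, hb⟩ := coe_mem_markedCirc_iff.mp (hF.2.2.2 x ▸ f.2.2 _ hx)
    exact ⟨a - b, by push_cast; rw [mul_sub, ha, hb]⟩
  have key : ((m : ℝ) + 1) * (liftNear g.2.1 (F 0) x - F x)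
      = ((m : ℝ) + 1) * (liftNear f.2.1 (F 0) x - F x) :=
    isPathConnected_pathComponent.isConnected.isPreconnected.constant_of_mapsTo
      Int.isClosedEmbedding_coe_real.isInducing.isDiscrete_range
      (continuousOn_const.mul (((continuousOn_liftNear_apply _ x).mono hS).sub continuousOn_const))
      hmaps hg (mem_pathComponent_self f)
  rw [hF.liftNear_eq, sub_self, mul_zero, mul_eq_zero, sub_eq_zero] at key
  exact key.resolve_left (by positivity)

variable {f : ECirc n m} {F : ℝ → ℝ} (hF : IsLift f.1 F)

/-- The straight-line homotopy, on lifts normalized at `0`, from `g` to `f`. -/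
noncomputable def contraction (t : I) (g : pathComponent f) : ECirc n m :=
  ⟨_, ⟨_, (isLift_liftNear g.1.2.1 (F 0)).interpolate hF t⟩, by
    rintro _ ⟨k, rfl⟩
    rw [descendLift_coe, liftNear_eq_of_mem_pathComponent hF g.2 ⟨k, rfl⟩, ← add_mul,
      sub_add_cancel, one_mul, ← hF.2.2.2]
    exact f.2.2 _ ⟨k, rfl⟩⟩

theorem contraction_zero (g : pathComponent f) : contraction hF 0 g = g := by
  ext q
  obtain ⟨x, rfl⟩ := QuotientAddGroup.mk_surjective q
  simp [contraction, descendLift_coe, (isLift_liftNear g.1.2.1 (F 0)).2.2.2]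

theorem contraction_one (g : pathComponent f) : contraction hF 1 g = f := by
  ext q
  obtain ⟨x, rfl⟩ := QuotientAddGroup.mk_surjective q
  simp [contraction, descendLift_coe, hF.2.2.2]

theorem dist_contraction_le (t t' : I) {g g' : pathComponent f} (hd : dist g g' < 1 / 2) :
    dist (contraction hF t g) (contraction hF t' g') ≤ |(t : ℝ) - t'| + dist g g' := by
  refine ((isLift_liftNear g.1.2.1 (F 0)).interpolate hF t).dist_le
    ((isLift_liftNear g'.1.2.1 (F 0)).interpolate hF t') fun x => ?_
  have h0 (g : pathComponent f) : g.1.1 0 = F 0 := apply_zero_eq_of_mem_pathComponent hF g.2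
  set G := liftNear g.1.2.1 (F 0)
  set G' := liftNear g'.1.2.1 (F 0)
  have hGG' : |G x - G' x| ≤ dist g g' := abs_liftNear_sub_le (h0 g) (h0 g') hd x
  have hFG' : |F x - G' x| ≤ 1 :=
    abs_sub_le_one_of_monotone hF.2.1 hF.2.2.1 (isLift_liftNear _ _).2.1
      (isLift_liftNear _ _).2.2.1 (liftNear_zero (h0 g')).symm x
  have ht := unitInterval.one_minus_nonneg t
  calc |(1 - t) * G x + t * F x - ((1 - t') * G' x + t' * F x)|
      = |(1 - t) * (G x - G' x) + ((t : ℝ) - t') * (F x - G' x)| := by ring_nf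
    _ ≤ (1 - t) * |G x - G' x| + |(t : ℝ) - t'| * |F x - G' x| := by
      refine (abs_add_le _ _).trans_eq ?_
      rw [abs_mul, abs_mul, abs_of_nonneg ht]
    _ ≤ 1 * dist g g' + |(t : ℝ) - t'| * 1 := by
      gcongr
      · exact unitInterval.one_minus_le_one t
    _ = |(t : ℝ) - t'| + dist g g' := by ring

theorem continuous_contraction :
    Continuous fun p : I × pathComponent f => contraction hF p.1 p.2 := by
  rw [Metric.continuous_iff]
  rintro ⟨t, g⟩ ε hε
  refine ⟨min (ε / 2) (1 / 2), by positivity, fun ⟨t', g'⟩ hd => ?_⟩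
  rw [Prod.dist_eq, max_lt_iff] at hd
  obtain ⟨ht, hg⟩ := hd
  calc dist (contraction hF t' g') (contraction hF t g) ≤ |(t' : ℝ) - t| + dist g' g :=
        dist_contraction_le hF t' t (hg.trans_le (min_le_right _ _))
    _ < ε / 2 + ε / 2 := by
        rw [← Real.dist_eq, ← Subtype.dist_eq]
        exact add_lt_add (ht.trans_le (min_le_left _ _)) (hg.trans_le (min_le_left _ _))
    _ = ε := add_halves ε

theorem contraction_mem_pathComponent (t : I) (g : pathComponent f) :
    contraction hF t g ∈ pathComponent f := by
  have : PathConnectedSpace I := isPathConnected_iff_pathConnectedSpace.mp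
    ((convex_Icc (0 : ℝ) 1).isPathConnected (nonempty_Icc.2 zero_le_one))
  have hpath := isPathConnected_range
    ((continuous_contraction hF).comp (Continuous.prodMk_left g))
  simpa only [Function.comp_apply, contraction_one] using
    hpath.mem_pathComponent ⟨1, rfl⟩ ⟨t, rfl⟩

end ECirc

open ECirc in
/-- Every path component of `Map_{Λ_Top}(⟨n⟩,⟨m⟩)` is contractible: the mapping spaces of
the topological cyclic category are homotopy discrete. -/
theorem stmt_3 (n m : ℕ) (f : ECirc n m) :
    ContractibleSpace ↥(pathComponent f) := by
  obtain ⟨F, hF⟩ := f.2.1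
  rw [contractible_iff_id_nullhomotopic]
  exact ⟨⟨f, mem_pathComponent_self f⟩, ⟨{
    toFun := fun p => ⟨contraction hF p.1 p.2, contraction_mem_pathComponent hF p.1 p.2⟩
    continuous_toFun := (continuous_contraction hF).subtype_mk _
    map_zero_left := fun g => Subtype.ext (contraction_zero hF g)
    map_one_left := fun g => Subtype.ext (contraction_one hF g) }⟩⟩
end

section
/- For all natural numbers n and m: (1) for every f ∈ E(n,m) and every lift F of f, the function g_F : ℤ → ℤ defined by g_F(k) = (m+1)·F(k/(n+1)) is well defined (i.e., (m+1)·F(k/(n+1)) is an integer for every k ∈ ℤ) and belongs to ZM(n,m); (2) the ≈-class of g_F does not depend on the choice of lift F, and two maps f, f' ∈ E(n,m) lying in the same path component of E(n,m) yield ≈-equivalent elements; (3) the resulting map from the set of path components of E(n,m) to ZM(n,m)/≈ is a bijection; (4) this identification is compatible with composition: for f ∈ E(n,m) and h ∈ E(m,l) with lifts F and H, the composite h ∘ f lies in E(n,l), H ∘ F is a lift of h ∘ f, and g_{H∘F} = g_H ∘ g_F. -/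
/-- Membership in `ℤMon(ⁿ↺ℤ, ᵐ↺ℤ)`: monotone and equivariant. -/
def InZM (n m : ℕ) (f : ℤ → ℤ) : Prop :=
  Monotone f ∧ ∀ k : ℤ, f (k + (n + 1)) = f k + (m + 1)

/-- `ℤMon(ⁿ↺ℤ, ᵐ↺ℤ)`: monotone `ℤ`-equivariant maps. -/
abbrev ZM (n m : ℕ) : Type := {f : ℤ → ℤ // InZM n m f}

/-- The `ℤ`-action relation `≈` on `ZM n m`. -/
def ZMrel (n m : ℕ) (f g : ZM n m) : Prop :=
  ∃ c : ℤ, ∀ k : ℤ, g.1 k = f.1 (k + c * ((n : ℤ) + 1))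

/-- `g : ℤ → ℤ` is the map `g_F`, i.e. `g k = (m+1) · F (k/(n+1))`. -/
def IsGF (n m : ℕ) (F : ℝ → ℝ) (g : ℤ → ℤ) : Prop :=
  ∀ k : ℤ, (g k : ℝ) = ((m : ℝ) + 1) * F ((k : ℝ) / ((n : ℝ) + 1))

/-!
A lift `F` of `f ∈ E(n,m)` maps `(n+1)⁻¹ℤ` into `(m+1)⁻¹ℤ`, so `g_F` is integral, and
monotonicity and `F (x + 1) = F x + 1` make it an element of `ZM(n,m)`. If two maps are uniformly within
`1/(2(m+1))` of each other (in particular if they are equal), the difference of their lifts is a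
continuous function staying that close to `ℤ`, hence close to one fixed integer `c`; evaluated at
the marked points this forces `g_{F'} = g_F + c(m+1)`, i.e. the two are related by the `ℤ`-action.
So the class of `g_F` is locally constant on `E(n,m)`. Conversely, lifts with the same `g_F` are
joined by the straight-line homotopy, which keeps marked points marked, and every `g` is realized
by the piecewise linear interpolation of `k/(n+1) ↦ g k/(m+1)`.
-/

open Function Set Filter

lemma map_add_zsmul_of_map_add {G H : Type*} [AddGroup G] [AddCommGroup H] {φ : G → H}
    {a : G} {b : H} (h : ∀ x, φ (x + a) = φ x + b) (c : ℤ) (x : G) :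
    φ (x + c • a) = φ x + c • b := by
  induction c using Int.induction_on generalizing x with
  | zero => simp
  | succ c ih => rw [add_zsmul, one_zsmul, ← add_assoc, h, ih, add_zsmul, one_zsmul, add_assoc]
  | pred c ih =>
    have h' := h (x + (-(c : ℤ) - 1) • a)
    rw [add_assoc, ← add_one_zsmul, sub_add_cancel, ih] at h'
    rw [eq_sub_of_add_eq h'.symm, sub_zsmul, one_zsmul]
    abel

lemma circ_coe_eq_coe_iff {x y : ℝ} : (x : Circ) = y ↔ ∃ c : ℤ, x = y + c := by
  rw [← sub_eq_zero, ← AddCircle.coe_sub, AddCircle.coe_eq_zero_iff]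
  simp only [zsmul_eq_mul, mul_one, eq_comm, sub_eq_iff_eq_add']

lemma round_eq_of_abs_sub_lt {x : ℝ} {c : ℤ} (h : |x - c| < 1 / 2) : round x = c := by
  rw [round_eq_iff]
  constructor <;> linarith [abs_lt.mp h]

lemma isLocallyConstant_round_comp {X : Type*} [TopologicalSpace X] {δ : X → ℝ}
    (hδ : Continuous δ) (h : ∀ x, |δ x - round (δ x)| < 1 / 2) :
    IsLocallyConstant fun x => round (δ x) := by
  rw [IsLocallyConstant.iff_eventually_eq]
  intro x
  have hε : 0 < 1 / 2 - |δ x - round (δ x)| := by linarith [h x]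
  filter_upwards [Metric.tendsto_nhds.mp (hδ.tendsto x) _ hε] with y hy
  apply round_eq_of_abs_sub_lt
  rw [Real.dist_eq] at hy
  calc |δ y - round (δ x)| ≤ |δ y - δ x| + |δ x - round (δ x)| := abs_sub_le _ _ _
    _ < 1 / 2 := by linarith

section Lift

variable {f : C(Circ, Circ)} {F : ℝ → ℝ}

lemma IsLift.map_add_intCast (hF : IsLift f F) (x : ℝ) (c : ℤ) : F (x + c) = F x + c := by
  simpa using map_add_zsmul_of_map_add hF.2.2.1 c x

lemma IsLift.ext {f' : C(Circ, Circ)} (hF : IsLift f F) (hF' : IsLift f' F) : f = f' := by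
  ext q
  induction q using QuotientAddGroup.induction_on with
  | H x => rw [hF.2.2.2, hF'.2.2.2]

lemma IsLift.comp {h : C(Circ, Circ)} {H : ℝ → ℝ} (hF : IsLift f F) (hH : IsLift h H) :
    IsLift (h.comp f) (H ∘ F) :=
  ⟨hH.1.comp hF.1, hH.2.1.comp hF.2.1, fun x => by simp only [comp_apply, hF.2.2.1, hH.2.2.1],
    fun x => by rw [ContinuousMap.comp_apply, hF.2.2.2, hH.2.2.2, comp_apply]⟩

end Lift

section GF

variable {n m : ℕ} {F : ℝ → ℝ} {g : ℤ → ℤ}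

lemma IsGF.apply_div (hg : IsGF n m F g) (k : ℤ) :
    F (k / ((n : ℝ) + 1)) = g k / ((m : ℝ) + 1) := by
  rw [hg k, mul_div_cancel_left₀ _ (by positivity)]

lemma isGF_iff_apply_div : IsGF n m F g ↔ ∀ k : ℤ, F (k / ((n : ℝ) + 1)) = g k / ((m : ℝ) + 1) :=
  ⟨IsGF.apply_div, fun h k => by rw [h k, mul_div_cancel₀ _ (by positivity)]⟩

lemma IsGF.comp {l : ℕ} {H : ℝ → ℝ} {g' : ℤ → ℤ} (hg : IsGF n m F g) (hg' : IsGF m l H g') :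
    IsGF n l (H ∘ F) (g' ∘ g) := fun k => by rw [comp_apply, hg' (g k), comp_apply, hg.apply_div]

lemma inZM_of_isGF (hmono : Monotone F) (hF : ∀ x, F (x + 1) = F x + 1) (hg : IsGF n m F g) :
    InZM n m g := by
  refine ⟨fun a b hab => ?_, fun k => ?_⟩
  · have : (g a : ℝ) ≤ g b := by
      rw [hg a, hg b]
      gcongr
      exact hmono (by gcongr)
    exact_mod_cast this
  · have : (g (k + (n + 1)) : ℝ) = g k + (m + 1) := by
      rw [hg, hg]
      push_cast
      rw [add_div, div_self (by positivity), hF]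
      ring
    exact_mod_cast this

end GF

section Marked

variable {n m : ℕ} {F : ℝ → ℝ}

lemma IsLift.exists_int_eq (f : ECirc n m) (hF : IsLift f.1 F) (k : ℤ) :
    ∃ j : ℤ, ((m : ℝ) + 1) * F (k / ((n : ℝ) + 1)) = j := by
  obtain ⟨j, hj⟩ := f.2.2 _ ⟨k, rfl⟩
  obtain ⟨c, hc⟩ := circ_coe_eq_coe_iff.mp ((hF.2.2.2 _).symm.trans hj)
  refine ⟨j + c * (m + 1), ?_⟩
  rw [hc]
  push_cast
  field_simp

lemma IsLift.exists_isGF (f : ECirc n m) (hF : IsLift f.1 F) : ∃ g : ZM n m, IsGF n m F g.1 := by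
  choose g hg using hF.exists_int_eq f
  have hGF : IsGF n m F g := fun k => (hg k).symm
  exact ⟨⟨g, inZM_of_isGF hF.2.1 hF.2.2.1 hGF⟩, hGF⟩

lemma mem_markedCirc_of_isGF {g : ℤ → ℤ} (hg : IsGF n m F g)
    {f : C(Circ, Circ)} (hf : ∀ x : ℝ, f x = F x) : ∀ x ∈ markedCirc n, f x ∈ markedCirc m := by
  rintro x ⟨k, rfl⟩
  exact ⟨g k, by rw [hf, hg.apply_div]⟩

end Marked

section ZMrel

variable {n m : ℕ}

lemma ZM.map_add_mul (g : ZM n m) (k c : ℤ) :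
    g.1 (k + c * ((n : ℤ) + 1)) = g.1 k + c * ((m : ℤ) + 1) := by
  simpa only [zsmul_eq_mul, Int.cast_id] using map_add_zsmul_of_map_add g.2.2 c k

lemma zmRel_equivalence : Equivalence (ZMrel n m) where
  refl _ := ⟨0, by simp⟩
  symm := by
    rintro g g' ⟨c, hc⟩
    exact ⟨-c, fun k => by rw [hc]; ring_nf⟩
  trans := by
    rintro g g' g'' ⟨c, hc⟩ ⟨d, hd⟩
    exact ⟨c + d, fun k => by rw [hd, hc]; ring_nf⟩

lemma quot_mk_eq_iff_zmRel (g g' : ZM n m) :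
    Quot.mk (ZMrel n m) g = Quot.mk _ g' ↔ ZMrel n m g g' :=
  zmRel_equivalence.quot_mk_eq_iff g g'

lemma zmRel_of_eq_add_mul {g g' : ZM n m} {c : ℤ} (h : ∀ k, g'.1 k = g.1 k + c * ((m : ℤ) + 1)) :
    ZMrel n m g g' :=
  ⟨c, fun k => by rw [h, g.map_add_mul]⟩

end ZMrel

section Invariance

variable {n m : ℕ}

lemma zmRel_of_dist_lt {f₁ f₂ : C(Circ, Circ)} {F₁ F₂ : ℝ → ℝ} {g₁ g₂ : ZM n m}
    (hF₁ : IsLift f₁ F₁) (hF₂ : IsLift f₂ F₂) (hg₁ : IsGF n m F₁ g₁.1) (hg₂ : IsGF n m F₂ g₂.1)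
    (hclose : ∀ q, dist (f₁ q) (f₂ q) < 1 / (2 * ((m : ℝ) + 1))) : ZMrel n m g₁ g₂ := by
  have hm : (0 : ℝ) < m + 1 := by positivity
  have hδ : ∀ x, |(F₁ x - F₂ x) - round (F₁ x - F₂ x)| < 1 / (2 * ((m : ℝ) + 1)) := fun x => by
    rw [← UnitAddCircle.norm_eq, AddCircle.coe_sub, ← hF₁.2.2.2, ← hF₂.2.2.2, ← dist_eq_norm]
    exact hclose x
  have hε : 1 / (2 * ((m : ℝ) + 1)) ≤ 1 / 2 := by gcongr; linarith
  obtain ⟨c, hc⟩ : ∃ c : ℤ, ∀ x, round (F₁ x - F₂ x) = c :=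
    ⟨_, ((isLocallyConstant_round_comp (hF₁.1.sub hF₂.1) fun x => (hδ x).trans_le hε)
      |>.apply_eq_of_preconnectedSpace · 0)⟩
  refine zmRel_of_eq_add_mul (c := -c) fun k => ?_
  obtain ⟨x, hx⟩ : ∃ x : ℝ, x = k / ((n : ℝ) + 1) := ⟨_, rfl⟩
  have hk : |((g₁.1 k - g₂.1 k - c * ((m : ℤ) + 1) : ℤ) : ℝ)| < 1 := by
    push_cast
    calc |(g₁.1 k : ℝ) - g₂.1 k - c * (m + 1)|
        = |(m + 1) * ((F₁ x - F₂ x) - round (F₁ x - F₂ x))| := by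
          rw [hc, hg₁ k, hg₂ k, ← hx]
          ring_nf
      _ = (m + 1) * |(F₁ x - F₂ x) - round (F₁ x - F₂ x)| := by rw [abs_mul, abs_of_pos hm]
      _ < (m + 1) * (1 / (2 * (m + 1))) := by gcongr; exact hδ x
      _ < 1 := by field_simp; norm_num
  have := Int.abs_lt_one_iff.mp (by exact_mod_cast hk)
  push_cast at this
  linarith

lemma zmRel_of_isLift {f : C(Circ, Circ)} {F F' : ℝ → ℝ} {g g' : ZM n m} (hF : IsLift f F)
    (hF' : IsLift f F') (hg : IsGF n m F g.1) (hg' : IsGF n m F' g'.1) : ZMrel n m g g' :=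
  zmRel_of_dist_lt hF hF' hg hg' fun q => by rw [dist_self]; positivity

noncomputable def zmClass (f : ECirc n m) : Quot (ZMrel n m) :=
  Quot.mk _ (f.2.1.choose_spec.exists_isGF f).choose

lemma zmClass_eq {f : ECirc n m} {F : ℝ → ℝ} {g : ZM n m} (hF : IsLift f.1 F)
    (hg : IsGF n m F g.1) : zmClass f = Quot.mk _ g :=
  Quot.sound <| zmRel_of_isLift f.2.1.choose_spec hF
    (f.2.1.choose_spec.exists_isGF f).choose_spec hg

lemma isLocallyConstant_zmClass : IsLocallyConstant (zmClass (n := n) (m := m)) := by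
  rw [IsLocallyConstant.iff_eventually_eq]
  intro f
  obtain ⟨F, hF⟩ := f.2.1
  obtain ⟨g, hg⟩ := hF.exists_isGF f
  have hε : (0 : ℝ) < 1 / (2 * ((m : ℝ) + 1)) := by positivity
  filter_upwards [Metric.ball_mem_nhds f hε] with f' hf'
  obtain ⟨F', hF'⟩ := f'.2.1
  obtain ⟨g', hg'⟩ := hF'.exists_isGF f'
  rw [zmClass_eq hF hg, zmClass_eq hF' hg', quot_mk_eq_iff_zmRel]
  exact zmRel_of_dist_lt hF' hF hg' hg fun q => (ContinuousMap.dist_apply_le_dist q).trans_lt hf'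

lemma zmClass_eq_of_joined {f f' : ECirc n m} (h : Joined f f') : zmClass f = zmClass f' := by
  obtain ⟨γ⟩ := h
  simpa using
    (isLocallyConstant_zmClass.comp_continuous γ.continuous).apply_eq_of_preconnectedSpace 0 1

end Invariance

section PiecewiseLinear

variable (g : ℤ → ℝ)

noncomputable def piecewiseLinear (u : ℝ) : ℝ :=
  g ⌊u⌋ + Int.fract u * (g (⌊u⌋ + 1) - g ⌊u⌋)

lemma piecewiseLinear_intCast (k : ℤ) : piecewiseLinear g k = g k := by
  simp [piecewiseLinear]

lemma piecewiseLinear_eqOn_Icc (k : ℤ) :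
    EqOn (piecewiseLinear g) (fun u => g k + (u - k) * (g (k + 1) - g k)) (Icc k (k + 1)) := by
  rintro u ⟨hku, huk⟩
  rcases huk.lt_or_eq with hlt | rfl
  · simp only [piecewiseLinear, Int.fract, Int.floor_eq_iff.mpr ⟨hku, hlt⟩]
  · rw [show (k : ℝ) + 1 = ((k + 1 : ℤ) : ℝ) by push_cast; ring, piecewiseLinear_intCast]
    push_cast
    ring

lemma continuous_piecewiseLinear : Continuous (piecewiseLinear g) := by
  refine LocallyFinite.continuous (f := fun k : ℤ => Icc (k : ℝ) (k + 1))
    (locallyFinite_Icc_of_tendsto tendsto_intCast_atTop_atTop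
      (tendsto_atBot_add_const_right _ 1 (tendsto_intCast_atBot_iff.mpr tendsto_id)))
    (iUnion_eq_univ_iff.mpr fun u => ⟨⌊u⌋, Int.floor_le u, (Int.lt_floor_add_one u).le⟩)
    (fun _ => isClosed_Icc) fun k => ?_
  exact (Continuous.continuousOn (by fun_prop)).congr (piecewiseLinear_eqOn_Icc g k)

variable {g}

lemma piecewiseLinear_mem_Icc (hg : Monotone g) (u : ℝ) :
    piecewiseLinear g u ∈ Icc (g ⌊u⌋) (g (⌊u⌋ + 1)) := by
  have h₀ := Int.fract_nonneg u
  have h₁ := Int.fract_lt_one u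
  have hd : g ⌊u⌋ ≤ g (⌊u⌋ + 1) := hg (Int.le_add_one le_rfl)
  constructor <;> simp only [piecewiseLinear] <;> nlinarith

lemma monotone_piecewiseLinear (hg : Monotone g) : Monotone (piecewiseLinear g) := by
  intro u v huv
  rcases (Int.floor_le_floor huv).lt_or_eq with hlt | heq
  · calc piecewiseLinear g u ≤ g (⌊u⌋ + 1) := (piecewiseLinear_mem_Icc hg u).2
      _ ≤ g ⌊v⌋ := hg hlt
      _ ≤ piecewiseLinear g v := (piecewiseLinear_mem_Icc hg v).1
  · have hfract : Int.fract u ≤ Int.fract v := by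
      simp only [Int.fract, heq]
      linarith
    have hd : g ⌊u⌋ ≤ g (⌊u⌋ + 1) := hg (Int.le_add_one le_rfl)
    simp only [piecewiseLinear, ← heq]
    nlinarith

lemma piecewiseLinear_add_intCast {p : ℤ} {q : ℝ} (hg : ∀ k, g (k + p) = g k + q) (u : ℝ) :
    piecewiseLinear g (u + p) = piecewiseLinear g u + q := by
  simp only [piecewiseLinear, Int.floor_add_intCast, Int.fract_add_intCast]
  rw [add_right_comm _ p 1, hg, hg]
  ring

end PiecewiseLinear

section CircMap

variable {F : ℝ → ℝ}

lemma periodic_coe_comp (hF : ∀ x, F (x + 1) = F x + 1) : Periodic (fun x => (F x : Circ)) 1 :=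
  fun x => by simp only [hF, AddCircle.coe_add_period]

noncomputable def circMap (hF : ∀ x, F (x + 1) = F x + 1) : Circ → Circ :=
  (periodic_coe_comp hF).lift

lemma continuous_circMap (hF : ∀ x, F (x + 1) = F x + 1) (hc : Continuous F) :
    Continuous (circMap hF) :=
  continuous_coinduced_dom.mpr ((AddCircle.continuous_mk' 1).comp hc)

lemma continuous_circMap_uncurry {X : Type*} [TopologicalSpace X] {Φ : X → ℝ → ℝ}
    (hΦ : ∀ t x, Φ t (x + 1) = Φ t x + 1) (hc : Continuous (uncurry Φ)) :
    Continuous fun p : X × Circ => circMap (hΦ p.1) p.2 := by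
  rw [(IsOpenQuotientMap.id.prodMap QuotientAddGroup.isOpenQuotientMap_mk).isQuotientMap
    |>.continuous_iff]
  exact (AddCircle.continuous_mk' 1).comp hc

variable {n m : ℕ} {g : ℤ → ℤ}

noncomputable def ECirc.ofLift (hc : Continuous F) (hmono : Monotone F)
    (hF : ∀ x, F (x + 1) = F x + 1) (hg : IsGF n m F g) : ECirc n m :=
  ⟨⟨circMap hF, continuous_circMap hF hc⟩, ⟨F, hc, hmono, hF, fun _ => rfl⟩,
    mem_markedCirc_of_isGF hg fun _ => rfl⟩

lemma ECirc.isLift_ofLift (hc : Continuous F) (hmono : Monotone F)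
    (hF : ∀ x, F (x + 1) = F x + 1) (hg : IsGF n m F g) :
    IsLift (ECirc.ofLift hc hmono hF hg).1 F :=
  ⟨hc, hmono, hF, fun _ => rfl⟩

end CircMap

section Realization

variable {n m : ℕ}

lemma exists_ecirc_isGF (g : ZM n m) : ∃ f : ECirc n m, ∃ F, IsLift f.1 F ∧ IsGF n m F g.1 := by
  have hm : ((m : ℝ) + 1) ≠ 0 := by positivity
  set G := piecewiseLinear fun k => (g.1 k : ℝ) / (m + 1)
  have hG : ∀ u : ℝ, G (u + ((n + 1 : ℤ) : ℝ)) = G u + 1 := piecewiseLinear_add_intCast fun k => by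
    rw [g.2.2 k]
    push_cast
    field_simp
  let F : ℝ → ℝ := fun x => G ((n + 1) * x)
  have hc : Continuous F := (continuous_piecewiseLinear _).comp (by fun_prop)
  have hmono : Monotone F := (monotone_piecewiseLinear fun a b hab => by
    gcongr
    exact_mod_cast g.2.1 hab).comp fun x y hxy => by gcongr
  have hF : ∀ x, F (x + 1) = F x + 1 := fun x => by
    simp only [F, ← hG, mul_add_one]
    push_cast
    ring_nf
  have hg : IsGF n m F g.1 := isGF_iff_apply_div.mpr fun k => by
    simp only [F, mul_div_cancel₀ _ (by positivity : ((n : ℝ) + 1) ≠ 0), G, piecewiseLinear_intCast]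
  exact ⟨ECirc.ofLift hc hmono hF hg, F, ECirc.isLift_ofLift hc hmono hF hg, hg⟩

lemma zmClass_surjective : Surjective (zmClass (n := n) (m := m)) := by
  rintro ⟨g⟩
  obtain ⟨f, F, hF, hg⟩ := exists_ecirc_isGF g
  exact ⟨f, zmClass_eq hF hg⟩

end Realization

section Homotopy

variable {n m : ℕ}

lemma IsLift.comp_add_intCast {f : C(Circ, Circ)} {F : ℝ → ℝ} (hF : IsLift f F) (c : ℤ) :
    IsLift f fun x => F (x + c) :=
  ⟨hF.1.comp (continuous_add_const _), fun _ _ hab => hF.2.1 (by linarith),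
    fun x => by simp only [add_right_comm x 1, hF.2.2.1],
    fun x => by
      simp only [hF.2.2.2, hF.map_add_intCast, eq_comm (a := ((F x : ℝ) : Circ)),
        circ_coe_eq_coe_iff]
      exact ⟨c, rfl⟩⟩

lemma joined_of_isGF {f f' : ECirc n m} {F F' : ℝ → ℝ} {g : ℤ → ℤ} (hF : IsLift f.1 F)
    (hF' : IsLift f'.1 F') (hg : IsGF n m F g) (hg' : IsGF n m F' g) : Joined f f' := by
  let Φ : unitInterval → ℝ → ℝ := fun t x => (1 - t) * F x + t * F' x
  have hc : Continuous (uncurry Φ) := by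
    have := hF.1
    have := hF'.1
    fun_prop
  have hΦ : ∀ t x, Φ t (x + 1) = Φ t x + 1 := fun t x => by
    simp only [Φ, hF.2.2.1, hF'.2.2.1]
    ring
  have hmono : ∀ t, Monotone (Φ t) := fun t a b hab => by
    have := unitInterval.one_minus_nonneg t
    have := unitInterval.nonneg t
    have := hF.2.1 hab
    have := hF'.2.1 hab
    simp only [Φ]
    gcongr
  have hΦg : ∀ t, IsGF n m (Φ t) g := fun t => isGF_iff_apply_div.mpr fun k => by
    simp only [Φ, hg.apply_div, hg'.apply_div]
    ring
  let γ : unitInterval → ECirc n m := fun t =>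
    ECirc.ofLift (hc.comp (Continuous.prodMk_right t)) (hmono t) (hΦ t) (hΦg t)
  have hγ : ∀ t, IsLift (γ t).1 (Φ t) := fun t => ECirc.isLift_ofLift _ _ _ _
  refine ⟨{ toFun := γ, continuous_toFun := ?_, source' := ?_, target' := ?_ }⟩
  · exact (ContinuousMap.curry ⟨_, continuous_circMap_uncurry hΦ hc⟩).continuous.subtype_mk _
  · exact Subtype.ext <| IsLift.ext (by simpa [Φ] using hγ 0) hF
  · exact Subtype.ext <| IsLift.ext (by simpa [Φ] using hγ 1) hF'

lemma joined_of_zmRel {f f' : ECirc n m} {F F' : ℝ → ℝ} {g g' : ZM n m} (hF : IsLift f.1 F)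
    (hF' : IsLift f'.1 F') (hg : IsGF n m F g.1) (hg' : IsGF n m F' g'.1)
    (h : ZMrel n m g g') : Joined f f' := by
  obtain ⟨c, hc⟩ := h
  refine joined_of_isGF (hF.comp_add_intCast c) hF' (fun k => ?_) hg'
  rw [hc, hg]
  push_cast
  rw [add_div, mul_div_cancel_right₀ _ (by positivity)]

lemma joined_of_zmClass_eq {f f' : ECirc n m} (h : zmClass f = zmClass f') : Joined f f' := by
  obtain ⟨F, hF⟩ := f.2.1
  obtain ⟨F', hF'⟩ := f'.2.1
  obtain ⟨g, hg⟩ := hF.exists_isGF f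
  obtain ⟨g', hg'⟩ := hF'.exists_isGF f'
  rw [zmClass_eq hF hg, zmClass_eq hF' hg', quot_mk_eq_iff_zmRel] at h
  exact joined_of_zmRel hF hF' hg hg' h

end Homotopy

/-- The identification `π₀ Map_{Λ_Top}(⟨n⟩,⟨m⟩) ≅ ℤMon(ⁿ↺ℤ, ᵐ↺ℤ)/ℤ`:
(1) `g_F` is a well-defined element of `ZM n m`; (2) its `≈`-class is independent of the lift
and invariant on path components; (3) the induced map on path components is a bijection;
(4) the identification is compatible with composition. -/
theorem stmt_4 (n m l : ℕ) :
    -- (1) well-definedness: `(m+1)·F(k/(n+1))` is an integer, and `g_F ∈ ZM(n,m)`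
    (∀ f : ECirc n m, ∀ F : ℝ → ℝ, IsLift f.1 F →
      (∀ k : ℤ, ∃ j : ℤ, ((m : ℝ) + 1) * F ((k : ℝ) / ((n : ℝ) + 1)) = (j : ℝ)) ∧
      ∃ g : ZM n m, IsGF n m F g.1) ∧
    -- (2a) independence of the lift
    (∀ f : ECirc n m, ∀ F F' : ℝ → ℝ, ∀ g g' : ZM n m,
      IsLift f.1 F → IsLift f.1 F' → IsGF n m F g.1 → IsGF n m F' g'.1 →
      ZMrel n m g g') ∧
    -- (2b) maps in the same path component give `≈`-equivalent elements
    (∀ f f' : ECirc n m, ∀ F F' : ℝ → ℝ, ∀ g g' : ZM n m,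
      IsLift f.1 F → IsLift f'.1 F' → IsGF n m F g.1 → IsGF n m F' g'.1 →
      Joined f f' → ZMrel n m g g') ∧
    -- (3) the resulting map `π₀ E(n,m) → ZM(n,m)/≈` is a bijection
    (∃ Φ : Quot (fun f f' : ECirc n m => Joined f f') → Quot (ZMrel n m),
      Function.Bijective Φ ∧
      ∀ (f : ECirc n m) (F : ℝ → ℝ) (g : ZM n m), IsLift f.1 F → IsGF n m F g.1 →
        Φ (Quot.mk _ f) = Quot.mk _ g) ∧
    -- (4) compatibility with composition
    (∀ (f : ECirc n m) (h : ECirc m l) (F H : ℝ → ℝ) (g g' : ℤ → ℤ),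
      IsLift f.1 F → IsLift h.1 H → IsGF n m F g → IsGF m l H g' →
      IsLift (h.1.comp f.1) (H ∘ F) ∧
      (∀ x ∈ markedCirc n, (h.1.comp f.1) x ∈ markedCirc l) ∧
      IsGF n l (H ∘ F) (g' ∘ g)) := by
  refine ⟨fun f F hF => ⟨hF.exists_int_eq f, hF.exists_isGF f⟩,
    fun f F F' g g' hF hF' hg hg' => zmRel_of_isLift hF hF' hg hg',
    fun f f' F F' g g' hF hF' hg hg' hj => ?_,
    ⟨Quot.lift zmClass fun _ _ => zmClass_eq_of_joined, ⟨?_, ?_⟩,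
      fun f F g hF hg => zmClass_eq hF hg⟩,
    fun f h F H g g' hF hH hg hg' =>
      ⟨hF.comp hH, fun x hx => h.2.2 _ (f.2.2 x hx), hg.comp hg'⟩⟩
  · rw [← quot_mk_eq_iff_zmRel, ← zmClass_eq hF hg, ← zmClass_eq hF' hg']
    exact zmClass_eq_of_joined hj
  · rintro ⟨f⟩ ⟨f'⟩ h
    exact Quot.sound (joined_of_zmClass_eq h)
  · rintro q
    obtain ⟨f, rfl⟩ := zmClass_surjective q
    exact ⟨Quot.mk _ f, rfl⟩
end

section
/- Let n, m be natural numbers and let φ : ZMod (n+1) → ZMod (m+1) be a function. Then φ = φ_f for some f ∈ ZM(n,m) if and only if there exist integers i and j such that the function ρ : {0,…,n} → {0,…,m}, where ρ(k) is the unique representative in {0,…,m} of φ(i + 1 + k) − (j + 1) (computed in ZMod (m+1), with i + 1 + k computed in ZMod (n+1)), is monotone. (Equivalently: φ is weakly monotone when viewed as a map {i+1,…,n,0,…,i} → {j+1,…,m,0,…,j} with the rotated linear orders.) -/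
lemma aux_val_int (m : ℕ) (a : ℤ) (h0 : 0 ≤ a) (h1 : a ≤ m) :
    (((a : ZMod (m + 1)).val : ℤ)) = a := by
  lift a to ℕ using h0 with b
  rw [Int.cast_natCast, ZMod.val_natCast_of_lt (by omega)]

/-- A function `φ : ℤ/(n+1) → ℤ/(m+1)` is the underlying map of sets of a morphism in the
cyclic category `Λ` (i.e. `φ = φ_f` for some `f ∈ ℤMon(ⁿ↺ℤ, ᵐ↺ℤ)`) if and only if there are
`i, j` such that `φ` is weakly monotone when viewed as a map
`{i+1,…,n,0,…,i} → {j+1,…,m,0,…,j}` with the rotated linear orders. -/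
theorem stmt_5 (n m : ℕ) (φ : ZMod (n + 1) → ZMod (m + 1)) :
    (∃ f : ZM n m, ∀ k : ℤ, φ ((k : ZMod (n + 1))) = ((f.1 k : ℤ) : ZMod (m + 1))) ↔
    (∃ i j : ℤ, ∀ k k' : ℕ, k ≤ k' → k' ≤ n →
      (φ (((i + 1 + (k : ℤ)) : ℤ) : ZMod (n + 1)) - (((j + 1 : ℤ)) : ZMod (m + 1))).val ≤
      (φ (((i + 1 + (k' : ℤ)) : ℤ) : ZMod (n + 1)) - (((j + 1 : ℤ)) : ZMod (m + 1))).val) := by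
  constructor
  · rintro ⟨⟨f, hmono, heq⟩, hφ⟩
    simp only at hφ
    -- find a jump point
    have hjump : ∃ i : ℤ, f i < f (i + 1) := by
      by_contra h
      push_neg at h
      have hle : ∀ t : ℕ, f t ≤ f 0 := by
        intro t
        induction t with
        | zero => norm_num
        | succ t ih =>
          have := h (t : ℤ)
          have : ((t : ℤ) + 1) = ((t + 1 : ℕ) : ℤ) := by push_cast; ring
          calc f ((t + 1 : ℕ) : ℤ) = f ((t : ℤ) + 1) := by norm_cast
            _ ≤ f t := h t
            _ ≤ f 0 := ih
      have h1 : f (0 + ((n : ℤ) + 1)) = f 0 + ((m : ℤ) + 1) := heq 0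
      have h2 : f (((n + 1 : ℕ) : ℤ)) ≤ f 0 := hle (n + 1)
      have h3 : (0 + ((n : ℤ) + 1)) = ((n + 1 : ℕ) : ℤ) := by push_cast; ring
      rw [h3] at h1
      omega
    obtain ⟨i, hi⟩ := hjump
    refine ⟨i, f (i + 1) - 1, ?_⟩
    have key : ∀ k : ℕ, k ≤ n →
        (((φ (((i + 1 + (k : ℤ)) : ℤ) : ZMod (n + 1)) -
          (((f (i + 1) - 1 + 1 : ℤ)) : ZMod (m + 1))).val : ℤ)) = f (i + 1 + k) - f (i + 1) := by
      intro k hk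
      have h0 : 0 ≤ f (i + 1 + k) - f (i + 1) := by
        have := hmono (show i + 1 ≤ i + 1 + k by omega)
        omega
      have h1 : f (i + 1 + k) - f (i + 1) ≤ m := by
        have hm1 : f (i + 1 + (n : ℤ)) = f i + ((m : ℤ) + 1) := by
          have := heq i
          have e : i + ((n : ℤ) + 1) = i + 1 + n := by ring
          rw [e] at this
          exact this
        have hm2 : f (i + 1 + (k : ℤ)) ≤ f (i + 1 + (n : ℤ)) :=
          hmono (by omega)
        omega
      have hcast : φ (((i + 1 + (k : ℤ)) : ℤ) : ZMod (n + 1)) -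
          (((f (i + 1) - 1 + 1 : ℤ)) : ZMod (m + 1)) =
          (((f (i + 1 + k) - f (i + 1) : ℤ)) : ZMod (m + 1)) := by
        rw [hφ (i + 1 + k)]
        push_cast
        ring
      rw [hcast]
      exact aux_val_int m _ h0 h1
    intro k k' hkk hkn
    have e1 := key k (le_trans hkk hkn)
    have e2 := key k' hkn
    have := hmono (show i + 1 + (k : ℤ) ≤ i + 1 + (k' : ℤ) by
      have : (k : ℤ) ≤ k' := by exact_mod_cast hkk
      omega)
    omega
  · rintro ⟨i, j, hρ⟩
    set N : ℤ := (n : ℤ) + 1 with hN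
    have hNpos : 0 < N := by positivity
    set ρ : ℤ → ℤ := fun t =>
      ((φ (((i + 1 + t) : ℤ) : ZMod (n + 1)) - (((j + 1 : ℤ)) : ZMod (m + 1))).val : ℤ)
      with hρdef
    have hρ0 : ∀ t, 0 ≤ ρ t := fun t => Int.natCast_nonneg _
    have hρm : ∀ t, ρ t ≤ m := by
      intro t
      have := ZMod.val_lt (φ (((i + 1 + t) : ℤ) : ZMod (n + 1)) - (((j + 1 : ℤ)) : ZMod (m + 1)))
      simp only [hρdef]
      omega
    have hρmono : ∀ s t : ℤ, 0 ≤ s → s ≤ t → t ≤ n → ρ s ≤ ρ t := by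
      intro s t hs hst htn
      have hs' : s = ((s.toNat : ℕ) : ℤ) := by omega
      have ht' : t = ((t.toNat : ℕ) : ℤ) := by omega
      have := hρ s.toNat t.toNat (by omega) (by omega)
      simp only [hρdef]
      rw [hs', ht']
      exact_mod_cast this
    set q : ℤ → ℤ := fun k => (k - (i + 1)) / N with hq
    set r : ℤ → ℤ := fun k => (k - (i + 1)) % N with hr
    have hr0 : ∀ k, 0 ≤ r k := fun k => Int.emod_nonneg _ (by omega)
    have hrn : ∀ k, r k ≤ n := by
      intro k
      have h := Int.emod_lt_of_pos (k - (i + 1)) hNpos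
      simp only [hr]
      omega
    have hqr : ∀ k, k = i + 1 + q k * N + r k := by
      intro k
      have h := Int.mul_ediv_add_emod (k - (i + 1)) N
      simp only [hq, hr]
      linarith [h]
    set f : ℤ → ℤ := fun k => (j + 1) + q k * ((m : ℤ) + 1) + ρ (r k) with hf
    have hfmono : Monotone f := by
      intro a b hab
      have hqab : q a ≤ q b := Int.ediv_le_ediv hNpos (by omega)
      rcases eq_or_lt_of_le hqab with hqe | hql
      · have hrab : r a ≤ r b := by
          have ha := hqr a
          have hb := hqr b
          rw [← hqe] at hb
          omega
        have := hρmono (r a) (r b) (hr0 a) hrab (hrn b)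
        simp only [hf, hqe]
        omega
      · have h1 : q a * ((m : ℤ) + 1) + ((m : ℤ) + 1) ≤ q b * ((m : ℤ) + 1) := by
          have : q a + 1 ≤ q b := hql
          nlinarith [this]
        have := hρm (r a)
        have := hρ0 (r b)
        simp only [hf]
        omega
    have hfeq : ∀ k : ℤ, f (k + ((n : ℤ) + 1)) = f k + ((m : ℤ) + 1) := by
      intro k
      have hre : r (k + N) = r k := by
        simp only [hr]
        have : k + N - (i + 1) = (k - (i + 1)) + N * 1 := by ring
        rw [this, Int.add_mul_emod_self_left]
      have hqe : q (k + N) = q k + 1 := by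
        simp only [hq]
        have : k + N - (i + 1) = (k - (i + 1)) + 1 * N := by ring
        rw [this, Int.add_mul_ediv_right _ _ (by omega : N ≠ 0)]
      simp only [hf, hN] at *
      rw [hre, hqe]
      ring
    refine ⟨⟨f, hfmono, hfeq⟩, ?_⟩
    intro k
    simp only
    -- φ k = f k mod (m+1)
    have hNzero : ((N : ℤ) : ZMod (n + 1)) = 0 := by
      simp [hN]
    have hMzero : (((m : ℤ) + 1 : ℤ) : ZMod (m + 1)) = 0 := by
      push_cast
      simp
    have hNz : ((n : ZMod (n + 1)) + 1) = 0 := by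
      have h : ((n + 1 : ℕ) : ZMod (n + 1)) = 0 := ZMod.natCast_self _
      push_cast at h
      exact h
    have hMz : ((m : ZMod (m + 1)) + 1) = 0 := by
      have h : ((m + 1 : ℕ) : ZMod (m + 1)) = 0 := ZMod.natCast_self _
      push_cast at h
      exact h
    have hk2 : ((k : ℤ) : ZMod (n + 1)) = ((i + 1 + r k : ℤ) : ZMod (n + 1)) := by
      conv_lhs => rw [hqr k]
      push_cast [hN]
      rw [hNz]
      ring
    have hval : ∀ x : ZMod (m + 1), ((x.val : ℕ) : ZMod (m + 1)) = x := fun x =>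
      ZMod.natCast_rightInverse x
    rw [hk2]
    have hfk : ((f k : ℤ) : ZMod (m + 1)) = ((j + 1 : ℤ) : ZMod (m + 1)) +
        (φ (((i + 1 + r k) : ℤ) : ZMod (n + 1)) - (((j + 1 : ℤ)) : ZMod (m + 1))) := by
      simp only [hf, hρdef]
      push_cast
      rw [hMz, hval]
      ring
    rw [hfk]
    ring
end

section
/- Let n, m be natural numbers and let φ : ZMod (n+1) → ZMod (m+1) be a function that arises as φ_f for some f ∈ ZM(n,m). Then: (1) if φ is not constant, the fiber over φ is a singleton, i.e., any f, g ∈ ZM(n,m) with φ_f = φ_g = φ satisfy f ≈ g; (2) if φ is constant, the set of ≈-classes {[f] ∈ ZM(n,m)/≈ : φ_f = φ} has exactly n+1 elements (it is in bijection with ℤ/(n+1)). -/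
/-- `f ∈ ZM(n,m)` induces the map of underlying sets `φ : ℤ/(n+1) → ℤ/(m+1)`. -/
def Inducesφ (n m : ℕ) (f : ZM n m) (φ : ZMod (n + 1) → ZMod (m + 1)) : Prop :=
  ∀ k : ℤ, φ ((k : ZMod (n + 1))) = ((f.1 k : ℤ) : ZMod (m + 1))

variable {n m : ℕ}

namespace ZM

theorem map_add_mul_s6 (f : ZM n m) (k c : ℤ) :
    f.1 (k + c * ((n : ℤ) + 1)) = f.1 k + c * ((m : ℤ) + 1) := by
  induction c using Int.induction_on with
  | zero => simp
  | succ i ih => rw [add_mul, one_mul, ← add_assoc, f.2.2, ih]; ring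
  | pred i ih =>
    have h := f.2.2 (k + (-(i : ℤ) - 1) * ((n : ℤ) + 1))
    rw [show k + (-(i : ℤ) - 1) * ((n : ℤ) + 1) + ((n : ℤ) + 1) = k + -(i : ℤ) * ((n : ℤ) + 1)
      by ring, ih] at h
    linarith

theorem map_le_map_succ (f : ZM n m) (k : ℤ) : f.1 k ≤ f.1 (k + 1) :=
  f.2.1 (by omega)

theorem map_succ_le (f : ZM n m) (k : ℤ) : f.1 (k + 1) ≤ f.1 k + ((m : ℤ) + 1) := by
  rw [← f.2.2 k]
  exact f.2.1 (by omega)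

theorem eq_of_jump (f : ZM n m) {s : ℤ} (hs : f.1 s = f.1 (s - 1) + ((m : ℤ) + 1)) (k : ℤ) :
    f.1 k = f.1 s + (k - s) / ((n : ℤ) + 1) * ((m : ℤ) + 1) := by
  set r := (k - s) % ((n : ℤ) + 1)
  have hr₀ : 0 ≤ r := Int.emod_nonneg _ (by omega)
  have hr₁ : r < (n : ℤ) + 1 := Int.emod_lt_of_pos _ (by omega)
  have hk : k = s + r + (k - s) / ((n : ℤ) + 1) * ((n : ℤ) + 1) := by
    have := Int.emod_add_mul_ediv (k - s) ((n : ℤ) + 1); linarith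
  have hlow : f.1 s ≤ f.1 (s + r) := f.2.1 (by omega)
  have hhigh : f.1 (s + r) ≤ f.1 (s - 1 + ((n : ℤ) + 1)) := f.2.1 (by omega)
  rw [f.2.2, ← hs] at hhigh
  rw [hk, map_add_mul_s6, show s + r + (k - s) / ((n : ℤ) + 1) * ((n : ℤ) + 1) - s =
    r + (k - s) / ((n : ℤ) + 1) * ((n : ℤ) + 1) by ring,
    Int.add_mul_ediv_right _ _ (by omega), Int.ediv_eq_zero_of_lt hr₀ hr₁, le_antisymm hhigh hlow]
  ring

def translate (f : ZM n m) (a : ℤ) : ZM n m :=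
  ⟨fun k => f.1 (k + a), fun _ _ h => f.2.1 (by omega), fun k => by
    simp only [add_right_comm k, f.2.2]⟩

end ZM

theorem dvd_sub_of_intCast_eq {a b : ℤ} (h : (a : ZMod (m + 1)) = b) : (m : ℤ) + 1 ∣ b - a := by
  exact_mod_cast (ZMod.intCast_eq_intCast_iff_dvd_sub a b (m + 1)).mp h

namespace Inducesφ

variable {φ : ZMod (n + 1) → ZMod (m + 1)} {f g : ZM n m}

theorem dvd_sub (hf : Inducesφ n m f φ) (hg : Inducesφ n m g φ) (k : ℤ) :
    (m : ℤ) + 1 ∣ g.1 k - f.1 k :=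
  dvd_sub_of_intCast_eq (by rw [← hf, ← hg])

theorem apply_eq_of_jump (hf : Inducesφ n m f φ) {s : ℤ}
    (hs : f.1 s = f.1 (s - 1) + ((m : ℤ) + 1)) (x : ZMod (n + 1)) : φ x = φ s := by
  obtain ⟨k, rfl⟩ := ZMod.intCast_surjective x
  rw [hf, hf, f.eq_of_jump hs k]
  push_cast
  rw [show (m : ZMod (m + 1)) + 1 = 0 by exact_mod_cast ZMod.natCast_self (m + 1)]
  ring

theorem translate {c : ZMod (m + 1)} (hf : Inducesφ n m f φ) (hc : ∀ x, φ x = c) (a : ℤ) :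
    Inducesφ n m (f.translate a) φ := fun k => by
  rw [hc, show (f.translate a).1 k = f.1 (k + a) from rfl, ← hf, hc]

theorem exists_jump {c : ZMod (m + 1)} (hf : Inducesφ n m f φ) (hc : ∀ x, φ x = c) :
    ∃ s, f.1 s = f.1 (s - 1) + ((m : ℤ) + 1) := by
  by_contra! hnone
  have hflat : Function.Periodic f.1 1 := fun k => by
    obtain ⟨e, he⟩ := dvd_sub_of_intCast_eq (a := f.1 k) (b := f.1 (k + 1))
      (by rw [← hf, ← hf, hc, hc])
    have hle := f.map_succ_le k
    have hge := f.map_le_map_succ k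
    have hne := hnone (k + 1)
    rw [add_sub_cancel_right] at hne
    have he₀ : 0 ≤ e := by nlinarith
    have he₁ : e ≤ 1 := by nlinarith
    interval_cases e <;> omega
  have hperiod := hflat.int_mul ((n : ℤ) + 1) 0
  rw [Int.cast_id, mul_one, f.2.2] at hperiod
  omega

end Inducesφ

namespace ZMrel

variable {φ : ZMod (n + 1) → ZMod (m + 1)} {f g : ZM n m}

theorem equivalence (n m : ℕ) : Equivalence (ZMrel n m) where
  refl _ := ⟨0, fun k => by simp⟩
  symm := by
    rintro f g ⟨c, hc⟩
    exact ⟨-c, fun k => by rw [hc]; ring_nf⟩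
  trans := by
    rintro f g h ⟨c₁, hc₁⟩ ⟨c₂, hc₂⟩
    exact ⟨c₁ + c₂, fun k => by rw [hc₂, hc₁]; ring_nf⟩

theorem of_quot_mk_eq (h : Quot.mk (ZMrel n m) f = Quot.mk _ g) :
    ZMrel n m f g :=
  (equivalence n m).eqvGen_iff.mp (Quot.eqvGen_exact h)

theorem of_eq_add (c : ℤ) (h : ∀ k, g.1 k = f.1 k + c * ((m : ℤ) + 1)) :
    ZMrel n m f g :=
  ⟨c, fun k => by rw [h, ZM.map_add_mul_s6]⟩

theorem translate_iff (f : ZM n m) (a b : ℤ) :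
    ZMrel n m (f.translate a) (f.translate b) ↔ (a : ZMod (n + 1)) = b := by
  rw [ZMod.intCast_eq_intCast_iff_dvd_sub]
  push_cast
  constructor
  · rintro ⟨c, hc⟩
    set r := b - a - c * ((n : ℤ) + 1)
    have hper : Function.Periodic f.1 r := fun j => by
      have := hc (j - c * ((n : ℤ) + 1) - a)
      simp only [ZM.translate] at this
      rwa [show j - c * ((n : ℤ) + 1) - a + c * ((n : ℤ) + 1) + a = j by ring,
        show j - c * ((n : ℤ) + 1) - a + b = j + r by ring] at this
    have hr : r * ((m : ℤ) + 1) = 0 := by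
      have hshift := ZM.map_add_mul_s6 f 0 r
      have hfix := hper.int_mul ((n : ℤ) + 1) 0
      rw [Int.cast_id, mul_comm] at hfix
      linarith
    have : r = 0 := by
      rcases mul_eq_zero.mp hr with h | h
      · exact h
      · omega
    exact ⟨c, by linarith⟩
  · rintro ⟨c, hc⟩
    exact ⟨c, fun k => by
      simp only [ZM.translate]
      rw [show k + c * ((n : ℤ) + 1) + a = k + b by linear_combination -hc]⟩

theorem of_induces_of_not_const (hnc : ¬ ∃ c, ∀ x, φ x = c) (hf : Inducesφ n m f φ)
    (hg : Inducesφ n m g φ) : ZMrel n m f g := by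
  have hno_jump : ∀ {h : ZM n m}, Inducesφ n m h φ → ∀ k,
      h.1 (k + 1) ≠ h.1 k + ((m : ℤ) + 1) := fun hh k hk =>
    hnc ⟨_, hh.apply_eq_of_jump (s := k + 1) (by rwa [add_sub_cancel_right])⟩
  have hstep : Function.Periodic (fun k => g.1 k - f.1 k) 1 := fun k => by
    obtain ⟨e, he⟩ := _root_.dvd_sub (hf.dvd_sub hg (k + 1)) (hf.dvd_sub hg k)
    have := f.map_succ_le k
    have := f.map_le_map_succ k
    have := g.map_succ_le k
    have := g.map_le_map_succ k
    rcases lt_trichotomy e 0 with he' | rfl | he'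
    · have : ((m : ℤ) + 1) * e ≤ -((m : ℤ) + 1) := by nlinarith
      exact absurd (by linarith) (hno_jump hf k)
    · simp only
      linarith
    · have : (m : ℤ) + 1 ≤ ((m : ℤ) + 1) * e := by nlinarith
      exact absurd (by linarith) (hno_jump hg k)
  obtain ⟨c, hc⟩ := hf.dvd_sub hg 0
  refine of_eq_add c fun k => ?_
  have := hstep.int_mul k 0
  simp only [Int.cast_id, mul_one, zero_add] at this
  linarith

theorem exists_translate_of_induces {c : ZMod (m + 1)} {f₀ : ZM n m} (hf₀ : Inducesφ n m f₀ φ)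
    (hf : Inducesφ n m f φ) (hc : ∀ x, φ x = c) : ∃ a, ZMrel n m (f₀.translate a) f := by
  obtain ⟨s₀, hs₀⟩ := hf₀.exists_jump hc
  obtain ⟨s, hs⟩ := hf.exists_jump hc
  obtain ⟨e, he⟩ := dvd_sub_of_intCast_eq (a := f₀.1 s₀) (b := f.1 s)
    (by rw [← hf₀, ← hf, hc, hc])
  refine ⟨s₀ - s, of_eq_add e fun k => ?_⟩
  rw [show (f₀.translate (s₀ - s)).1 k = f₀.1 (k + (s₀ - s)) from rfl, f.eq_of_jump hs,
    f₀.eq_of_jump hs₀, show k + (s₀ - s) - s₀ = k - s by ring]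
  linarith

end ZMrel

theorem card_fiber_of_const {φ : ZMod (n + 1) → ZMod (m + 1)} {c : ZMod (m + 1)} {f₀ : ZM n m}
    (hf₀ : Inducesφ n m f₀ φ) (hc : ∀ x, φ x = c) :
    Nat.card {q : Quot (ZMrel n m) //
      ∃ f : ZM n m, Inducesφ n m f φ ∧ Quot.mk (ZMrel n m) f = q} = n + 1 := by
  let ψ : ZMod (n + 1) → {q : Quot (ZMrel n m) //
      ∃ f : ZM n m, Inducesφ n m f φ ∧ Quot.mk (ZMrel n m) f = q} :=
    fun x => ⟨Quot.mk _ (f₀.translate x.cast), _, hf₀.translate hc _, rfl⟩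
  have hψ : Function.Bijective ψ := by
    refine ⟨fun x y hxy => ?_, ?_⟩
    · have := (ZMrel.translate_iff f₀ _ _).mp (ZMrel.of_quot_mk_eq (congrArg Subtype.val hxy))
      rwa [ZMod.intCast_zmod_cast, ZMod.intCast_zmod_cast] at this
    · rintro ⟨_, f, hf, rfl⟩
      obtain ⟨a, ha⟩ := ZMrel.exists_translate_of_induces hf₀ hf hc
      refine ⟨a, Subtype.ext (Quot.sound ?_)⟩
      exact (ZMrel.equivalence n m).trans
        ((ZMrel.translate_iff f₀ _ _).mpr (ZMod.intCast_zmod_cast _)) ha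
  rw [← Nat.card_eq_of_bijective ψ hψ, Nat.card_zmod]

/-- Fibers of the underlying-set map `U : Hom_Λ(⟨n⟩,⟨m⟩) → Cyc(n̲,m̲)`:
(1) if `φ` is non-constant, the fiber over `φ` is a singleton;
(2) if `φ` is constant, the fiber has exactly `n+1` elements. -/
theorem stmt_6 (n m : ℕ) (φ : ZMod (n + 1) → ZMod (m + 1))
    (hφ : ∃ f : ZM n m, Inducesφ n m f φ) :
    ((¬ ∃ c, ∀ x, φ x = c) →
      ∀ f g : ZM n m, Inducesφ n m f φ → Inducesφ n m g φ → ZMrel n m f g) ∧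
    ((∃ c, ∀ x, φ x = c) →
      Nat.card {q : Quot (ZMrel n m) //
        ∃ f : ZM n m, Inducesφ n m f φ ∧ Quot.mk (ZMrel n m) f = q} = n + 1) := by
  refine ⟨fun hnc f g hf hg => ZMrel.of_induces_of_not_const hnc hf hg, fun ⟨_, hc⟩ => ?_⟩
  obtain ⟨f₀, hf₀⟩ := hφ
  exact card_fiber_of_const hf₀ hc
end

section
/- For all natural numbers n and m and every f ∈ ZM(n,m), there exists a unique pair (a, g) with a ∈ ℤ and g ∈ ZM(n,m) such that 0 ≤ g(0), g(n) ≤ m, and f(k) = g(k + a) for all k ∈ ℤ. (This is the canonical factorization in the paracyclic category: every morphism factors uniquely as a morphism of the simplex category, encoded by an element g of ZM(n,m) preserving the fundamental domain {0,…,n} → {0,…,m}, precomposed with a translation automorphism.) -/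
/-!
Translating `f` by `a` moves the point where `f` first becomes nonnegative, and equivariance turns
`f (c + n) ≤ m` into `f (c - 1) < 0`, since `f (c + n) = f (c - 1) + (m + 1)`. So the admissible
translations are exactly `a = -c`, where `c` is the least integer with `0 ≤ f c`; it exists because
`f` is monotone and unbounded in both directions.
-/

theorem Monotone.existsUnique_map_sub_one_lt_and_le {α : Type*} [LinearOrder α] {f : ℤ → α}
    (hf : Monotone f) {t : α} {x y : ℤ} (hx : f x < t) (hy : t ≤ f y) :
    ∃! c, f (c - 1) < t ∧ t ≤ f c := by
  have hbdd : ∀ j, t ≤ f j → x + 1 ≤ j := fun j hj => by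
    by_contra! hjx
    exact (hx.trans_le hj).not_ge (hf (by omega))
  obtain ⟨c, hc, hleast⟩ := Int.exists_least_of_bdd ⟨x + 1, hbdd⟩ ⟨y, hy⟩
  refine ⟨c, ⟨lt_of_not_ge fun h => by have := hleast _ h; omega, hc⟩, ?_⟩
  rintro c' ⟨hc'_pred, hc'⟩
  have hle : c ≤ c' := hleast c' hc'
  by_contra hne
  exact (hc'_pred.trans_le hc).not_ge (hf (by omega))

namespace InZM

variable {n m : ℕ} {f : ℤ → ℤ}

theorem map_add_mul (hf : InZM n m f) (c k : ℤ) : f (k + c * (n + 1)) = f k + c * (m + 1) := by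
  induction c using Int.induction_on with
  | zero => simp
  | succ c ih =>
    rw [show k + (c + 1) * (n + 1) = k + c * (n + 1) + (n + 1) by ring, hf.2, ih]
    ring
  | pred c ih =>
    have h := hf.2 (k + (-c - 1) * (n + 1))
    rw [show k + (-c - 1) * (n + 1) + (n + 1) = k + -c * (n + 1) by ring, ih] at h
    linarith

theorem comp_add_const (hf : InZM n m f) (a : ℤ) : InZM n m (fun k => f (k + a)) :=
  ⟨fun _ _ h => hf.1 (add_le_add_left h a), fun k => by simp only [add_right_comm k, hf.2]⟩

theorem exists_map_neg (hf : InZM n m f) : ∃ x, f x < 0 := by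
  refine ⟨0 + -(|f 0| + 1) * (n + 1), ?_⟩
  rw [hf.map_add_mul]
  nlinarith [le_abs_self (f 0), abs_nonneg (f 0)]

theorem exists_map_nonneg (hf : InZM n m f) : ∃ y, 0 ≤ f y := by
  refine ⟨0 + (|f 0| + 1) * (n + 1), ?_⟩
  rw [hf.map_add_mul]
  nlinarith [neg_abs_le (f 0), abs_nonneg (f 0)]

theorem existsUnique_nonneg_and_map_add_le (hf : InZM n m f) :
    ∃! c, 0 ≤ f c ∧ f (c + n) ≤ m := by
  obtain ⟨x, hx⟩ := hf.exists_map_neg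
  obtain ⟨y, hy⟩ := hf.exists_map_nonneg
  refine (existsUnique_congr fun c => ?_).mp (hf.1.existsUnique_map_sub_one_lt_and_le hx hy)
  have hper : f (c + n) = f (c - 1) + (m + 1) := by
    rw [← hf.2]
    ring_nf
  omega

end InZM

/-- Canonical factorization in the paracyclic category: every `f ∈ ℤMon(ⁿ↺ℤ, ᵐ↺ℤ)` factors
uniquely as `f = g(· + a)` where `g ∈ ℤMon(ⁿ↺ℤ, ᵐ↺ℤ)` preserves the fundamental domain
(`0 ≤ g 0` and `g n ≤ m`) and `a ∈ ℤ` is a translation. -/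
theorem stmt_7 (n m : ℕ) (f : ZM n m) :
    ∃! p : ℤ × ZM n m,
      (0 ≤ p.2.1 0 ∧ p.2.1 (n : ℤ) ≤ (m : ℤ)) ∧ ∀ k : ℤ, f.1 k = p.2.1 (k + p.1) := by
  obtain ⟨c, ⟨hc0, hcn⟩, hc_unique⟩ := f.2.existsUnique_nonneg_and_map_add_le
  refine ⟨(-c, ⟨fun k => f.1 (k + c), f.2.comp_add_const c⟩), ?_, ?_⟩
  · exact ⟨⟨by simpa using hc0, by simpa [add_comm] using hcn⟩, fun k => by simp⟩
  · rintro ⟨a, g⟩ ⟨⟨hg0, hgn⟩, hfac⟩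
    have hg : ∀ k, g.1 k = f.1 (k - a) := fun k => by simp [hfac]
    obtain rfl : -a = c := hc_unique (-a)
      ⟨by simpa [hg] using hg0, by simpa [hg, add_comm, ← sub_eq_add_neg] using hgn⟩
    ext k
    · simp
    · simp [hg, sub_eq_add_neg]
end

section
/- For all natural numbers n and m: (1) the equivariant extension is functorial, i.e., for monotone maps ψ : Fin(n+1) → Fin(m+1) and ψ' : Fin(m+1) → Fin(l+1) one has (ψ' ∘ ψ)̂ = ψ̂' ∘ ψ̂ as functions ℤ → ℤ; and (2) the induced map Mon([n],[m]) → ZM(n,m)/≈ sending ψ to the ≈-class of ψ̂ is injective. That is, the cyclic closure functor ι : Δ → Λ is a faithful functor that is bijective on objects. -/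
/-- `h ∈ ZM(n,m)` is the equivariant extension `ψ̂` of a map `ψ : Fin (n+1) → Fin (m+1)`. -/
def IsExtension (n m : ℕ) (ψ : Fin (n + 1) → Fin (m + 1)) (h : ZM n m) : Prop :=
  ∀ (c : ℤ) (k : Fin (n + 1)),
    h.1 (((k : ℕ) : ℤ) + c * ((n : ℤ) + 1)) = (((ψ k : ℕ) : ℤ)) + c * ((m : ℤ) + 1)

lemma my_decomp (n : ℕ) (k : ℤ) : ∃ (c : ℤ) (r : Fin (n + 1)),
    k = ((r : ℕ) : ℤ) + c * ((n : ℤ) + 1) := by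
  have hN : (0 : ℤ) < (n : ℤ) + 1 := by positivity
  refine ⟨k / ((n : ℤ) + 1), ⟨(k % ((n : ℤ) + 1)).toNat, ?_⟩, ?_⟩
  · have h1 : k % ((n : ℤ) + 1) < (n : ℤ) + 1 := Int.emod_lt_of_pos k hN
    have h0 : 0 ≤ k % ((n : ℤ) + 1) := Int.emod_nonneg k (by omega)
    omega
  · have h0 : 0 ≤ k % ((n : ℤ) + 1) := Int.emod_nonneg k (by omega)
    have := Int.mul_ediv_add_emod k ((n : ℤ) + 1)
    simp only [Int.toNat_of_nonneg h0]
    rw [mul_comm]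
    omega

/-- The cyclic closure functor `ι : Δ → Λ` is faithful (and bijective on objects):
(1) the equivariant extension is functorial: `(ψ' ∘ ψ)̂ = ψ̂' ∘ ψ̂`;
(2) the induced map `Mon([n],[m]) → ZM(n,m)/≈`, `ψ ↦ [ψ̂]`, is injective. -/
theorem stmt_9 (n m l : ℕ) :
    (∀ (ψ : Fin (n + 1) → Fin (m + 1)) (ψ' : Fin (m + 1) → Fin (l + 1)),
      Monotone ψ → Monotone ψ' →
      ∀ (h : ZM n m) (h' : ZM m l) (h'' : ZM n l),
        IsExtension n m ψ h → IsExtension m l ψ' h' → IsExtension n l (ψ' ∘ ψ) h'' →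
        h''.1 = h'.1 ∘ h.1) ∧
    (∀ (ψ ψ' : Fin (n + 1) → Fin (m + 1)), Monotone ψ → Monotone ψ' →
      ∀ (h h' : ZM n m), IsExtension n m ψ h → IsExtension n m ψ' h' →
        ZMrel n m h h' → ψ = ψ') := by
  constructor
  · intro ψ ψ' _ _ h h' h'' he he' he''
    funext k
    obtain ⟨c, r, rfl⟩ := my_decomp n k
    have e1 := he c r
    have e2 := he' c (ψ r)
    have e3 := he'' c r
    simp only [Function.comp_apply] at e3 ⊢
    rw [e3, e1, e2]
  · intro ψ ψ' _ _ h h' he he' hrel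
    obtain ⟨c, hc⟩ := hrel
    -- evaluate at k ∈ [0,n]
    have key : ∀ r : Fin (n + 1),
        ((ψ' r : ℕ) : ℤ) = ((ψ r : ℕ) : ℤ) + c * ((m : ℤ) + 1) := by
      intro r
      have e1 : h'.1 ((r : ℕ) : ℤ) = ((ψ' r : ℕ) : ℤ) := by
        have := he' 0 r; simpa using this
      have e2 := he c r
      have := hc ((r : ℕ) : ℤ)
      rw [e1, e2] at this
      exact this
    have hc0 : c = 0 := by
      have hb := key 0
      have h1 : ((ψ' 0 : ℕ) : ℤ) ≤ m := by exact_mod_cast Nat.le_of_lt_succ (ψ' 0).2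
      have h2 : ((ψ 0 : ℕ) : ℤ) ≤ m := by exact_mod_cast Nat.le_of_lt_succ (ψ 0).2
      have h3 : (0 : ℤ) ≤ ((ψ' 0 : ℕ) : ℤ) := Int.natCast_nonneg _
      have h4 : (0 : ℤ) ≤ ((ψ 0 : ℕ) : ℤ) := Int.natCast_nonneg _
      rcases lt_trichotomy c 0 with hlt | heq | hgt
      · nlinarith [hlt, hb]
      · exact heq
      · nlinarith [hgt, hb]
    funext r
    have := key r
    rw [hc0] at this
    simp only [zero_mul, add_zero] at this
    exact Fin.ext (by exact_mod_cast this.symm)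
end

section
/- Let Λ_c be the category whose objects are the natural numbers, whose hom-set from n to m is ZM(n,m)/≈, and whose composition is induced by composition of functions ℤ → ℤ (this composition is well defined on ≈-classes). Then Λ_c is isomorphic to its opposite category via an isomorphism of categories that is the identity on objects; that is, the cyclic category is self-dual. -/
open CategoryTheory

/-- Composition in `ℤMon`. -/
def compZM {n m l : ℕ} (f : ZM n m) (g : ZM m l) : ZM n l :=
  ⟨g.1 ∘ f.1, (g.2.1).comp f.2.1, fun k => by
    simp only [Function.comp_apply]
    rw [f.2.2 k, g.2.2]⟩

/-- Iterated equivariance. -/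
lemma ZM_iter {n m : ℕ} (f : ZM n m) (d : ℤ) :
    ∀ k : ℤ, f.1 (k + d * ((n : ℤ) + 1)) = f.1 k + d * ((m : ℤ) + 1) := by
  induction d using Int.induction_on with
  | zero => intro k; simp
  | succ i ih =>
      intro k
      have h1 : k + ((i : ℤ) + 1) * ((n : ℤ) + 1)
          = (k + ((n : ℤ) + 1)) + (i : ℤ) * ((n : ℤ) + 1) := by ring
      rw [h1, ih, f.2.2 k]
      ring
  | pred i ih =>
      intro k
      have h1 : k + (-(i : ℤ) - 1) * ((n : ℤ) + 1)
          = (k - ((n : ℤ) + 1)) + (-(i : ℤ)) * ((n : ℤ) + 1) := by ring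
      have h3 := f.2.2 (k - ((n : ℤ) + 1))
      have h4 : k - ((n : ℤ) + 1) + ((n : ℤ) + 1) = k := by ring
      rw [h4] at h3
      rw [h1, ih]
      linarith [h3]

lemma compZM_left {n m l : ℕ} (g : ZM m l) {f f' : ZM n m} (hf : ZMrel n m f f') :
    ZMrel n l (compZM f g) (compZM f' g) := by
  obtain ⟨c, hc⟩ := hf
  exact ⟨c, fun k => by simp only [compZM, Function.comp_apply, hc k]⟩

lemma compZM_right {n m l : ℕ} (f : ZM n m) {g g' : ZM m l} (hg : ZMrel m l g g') :
    ZMrel n l (compZM f g) (compZM f g') := by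
  obtain ⟨d, hd⟩ := hg
  refine ⟨d, fun k => ?_⟩
  calc (compZM f g').1 k = g'.1 (f.1 k) := rfl
    _ = g.1 (f.1 k + d * ((m : ℤ) + 1)) := hd (f.1 k)
    _ = g.1 (f.1 (k + d * ((n : ℤ) + 1))) := by rw [ZM_iter f d k]
    _ = (compZM f g).1 (k + d * ((n : ℤ) + 1)) := rfl

/-- The (combinatorial) cyclic category `Λ_c`: objects are natural numbers, morphisms
`n → m` are `≈`-classes of elements of `ℤMon(ⁿ↺ℤ, ᵐ↺ℤ)`. -/
def LambdaC : Type := ℕ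

instance : Category LambdaC where
  Hom n m := Quot (ZMrel n m)
  id n := Quot.mk _ ⟨id, monotone_id, fun _ => rfl⟩
  comp {a b c} f g :=
    Quot.lift₂ (fun f0 g0 => Quot.mk (ZMrel a c) (compZM f0 g0))
      (fun f0 _ _ hg => Quot.sound (compZM_right f0 hg))
      (fun _ _ g0 hf => Quot.sound (compZM_left g0 hf)) f g
  id_comp := by
    intro a b f
    induction f using Quot.ind with
    | _ f => rfl
  comp_id := by
    intro a b f
    induction f using Quot.ind with
    | _ f => rfl
  assoc := by
    intro a b c d f g h
    induction f using Quot.ind with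
    | _ f =>
      induction g using Quot.ind with
      | _ g =>
        induction h using Quot.ind with
        | _ h => rfl

/-! Every `f ∈ ZM(n,m)` is a monotone self-map of `ℤ` unbounded in both directions, so it has a
lower adjoint `f^∨ j = min {k | j ≤ f k}` and an upper adjoint `max {k | f k ≤ j}`; taking the
upper adjoint inverts `f ↦ f^∨`. Adjoints of equivariant maps are equivariant, adjunctions
compose in the reverse order, and precomposing `f` with the deck translation by `c` postcomposes
its adjoints with the translation by `-c`; hence `f ↦ f^∨` descends to a contravariant
isomorphism of `Λ_c`. -/

noncomputable section

/-- Junk (`sInf` of an empty or unbounded set) unless `f` is unbounded in both directions. -/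
def lowerAdjoint (f : ℤ → ℤ) (j : ℤ) : ℤ := sInf {k | j ≤ f k}

def upperAdjoint (f : ℤ → ℤ) (j : ℤ) : ℤ := sSup {k | f k ≤ j}

theorem gc_lowerAdjoint {f : ℤ → ℤ} (hf : Monotone f) (hup : ∀ j, ∃ k, j < f k)
    (hdown : ∀ j, ∃ k, f k < j) :
    GaloisConnection (lowerAdjoint f) f := by
  intro j k
  have hbdd : BddBelow {k | j ≤ f k} := by
    obtain ⟨k₀, hk₀⟩ := hdown j
    exact ⟨k₀, fun k hk => (hf.reflect_lt (hk₀.trans_le hk)).le⟩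
  have hne : {k | j ≤ f k}.Nonempty := (hup j).imp fun _ => le_of_lt
  exact ⟨fun h => (Int.csInf_mem hne hbdd).trans (hf h), fun h => csInf_le hbdd h⟩

theorem gc_upperAdjoint {f : ℤ → ℤ} (hf : Monotone f) (hup : ∀ j, ∃ k, j < f k)
    (hdown : ∀ j, ∃ k, f k < j) :
    GaloisConnection f (upperAdjoint f) := by
  intro k j
  have hbdd : BddAbove {k | f k ≤ j} := by
    obtain ⟨k₀, hk₀⟩ := hup j
    exact ⟨k₀, fun k hk => (hf.reflect_lt (hk.trans_lt hk₀)).le⟩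
  have hne : {k | f k ≤ j}.Nonempty := (hdown j).imp fun _ => le_of_lt
  exact ⟨fun h => le_csSup hbdd h, fun h => (hf h).trans (Int.csSup_mem hne hbdd)⟩

variable {n m l : ℕ}

theorem InZM.of_gc_left {l u : ℤ → ℤ} (gc : GaloisConnection l u) (hu : InZM n m u) :
    InZM m n l := by
  refine ⟨gc.monotone_l, fun j => eq_of_forall_ge_iff fun k => ?_⟩
  have hshift := hu.2 (k - (n + 1))
  rw [sub_add_cancel] at hshift
  calc l (j + (m + 1)) ≤ k ↔ j + (m + 1) ≤ u k := gc _ _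
    _ ↔ j ≤ u (k - (n + 1)) := by rw [hshift, add_le_add_iff_right]
    _ ↔ l j ≤ k - (n + 1) := (gc _ _).symm
    _ ↔ l j + (n + 1) ≤ k := le_sub_iff_add_le

theorem InZM.of_gc_right {l u : ℤ → ℤ} (gc : GaloisConnection l u) (hl : InZM n m l) :
    InZM m n u := by
  refine ⟨gc.monotone_u, fun j => eq_of_forall_le_iff fun k => ?_⟩
  have hshift := hl.2 (k - (n + 1))
  rw [sub_add_cancel] at hshift
  calc k ≤ u (j + (m + 1)) ↔ l k ≤ j + (m + 1) := (gc _ _).symm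
    _ ↔ l (k - (n + 1)) ≤ j := by rw [hshift, add_le_add_iff_right]
    _ ↔ k - (n + 1) ≤ u j := gc _ _
    _ ↔ k ≤ u j + (n + 1) := sub_le_iff_le_add

namespace ZM

def id (n : ℕ) : ZM n n := ⟨_root_.id, monotone_id, fun _ => rfl⟩

theorem exists_lt_apply (f : ZM n m) (j : ℤ) : ∃ k, j < f.1 k := by
  refine ⟨(|j - f.1 0| + 1) * (n + 1), ?_⟩
  have hiter := ZM_iter f (|j - f.1 0| + 1) 0
  rw [zero_add] at hiter
  rw [hiter]
  nlinarith [le_abs_self (j - f.1 0), mul_nonneg (abs_nonneg (j - f.1 0)) (Int.natCast_nonneg m)]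

theorem exists_apply_lt (f : ZM n m) (j : ℤ) : ∃ k, f.1 k < j := by
  refine ⟨-(|f.1 0 - j| + 1) * (n + 1), ?_⟩
  have hiter := ZM_iter f (-(|f.1 0 - j| + 1)) 0
  rw [zero_add] at hiter
  rw [hiter]
  nlinarith [le_abs_self (f.1 0 - j), mul_nonneg (abs_nonneg (f.1 0 - j)) (Int.natCast_nonneg m)]

/-- The dual `f^∨` of the paper. -/
def dual (f : ZM n m) : ZM m n :=
  ⟨lowerAdjoint f.1, f.2.of_gc_left (gc_lowerAdjoint f.2.1 f.exists_lt_apply f.exists_apply_lt)⟩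

def codual (f : ZM n m) : ZM m n :=
  ⟨upperAdjoint f.1,
    f.2.of_gc_right (gc_upperAdjoint f.2.1 f.exists_lt_apply f.exists_apply_lt)⟩

theorem gc_dual (f : ZM n m) : GaloisConnection (dual f).1 f.1 :=
  gc_lowerAdjoint f.2.1 f.exists_lt_apply f.exists_apply_lt

theorem gc_codual (f : ZM n m) : GaloisConnection f.1 (codual f).1 :=
  gc_upperAdjoint f.2.1 f.exists_lt_apply f.exists_apply_lt

theorem codual_dual (f : ZM n m) : codual (dual f) = f :=
  Subtype.ext <| funext fun _ => (gc_codual (dual f)).u_unique (gc_dual f) fun _ => rfl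

theorem dual_codual (f : ZM n m) : dual (codual f) = f :=
  Subtype.ext <| funext fun _ => (gc_dual (codual f)).l_unique (gc_codual f) fun _ => rfl

theorem dual_id (n : ℕ) : dual (ZM.id n) = ZM.id n :=
  Subtype.ext <| funext fun _ => (gc_dual (ZM.id n)).l_unique GaloisConnection.id fun _ => rfl

theorem codual_id (n : ℕ) : codual (ZM.id n) = ZM.id n :=
  Subtype.ext <| funext fun _ => (gc_codual (ZM.id n)).u_unique GaloisConnection.id fun _ => rfl

theorem dual_comp (f : ZM n m) (g : ZM m l) :
    dual (compZM f g) = compZM (dual g) (dual f) :=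
  Subtype.ext <| funext fun _ =>
    (gc_dual (compZM f g)).l_unique ((gc_dual g).compose (gc_dual f)) fun _ => rfl

theorem codual_comp (f : ZM n m) (g : ZM m l) :
    codual (compZM f g) = compZM (codual g) (codual f) :=
  Subtype.ext <| funext fun _ =>
    (gc_codual (compZM f g)).u_unique ((gc_codual f).compose (gc_codual g)) fun _ => rfl

end ZM

open ZM

theorem ZMrel.dual {f f' : ZM n m} (h : ZMrel n m f f') : ZMrel m n (dual f) (dual f') := by
  obtain ⟨c, hc⟩ := h
  refine ⟨-c, fun j => ?_⟩
  have htrans : GaloisConnection (· - c * (n + 1)) (· + c * (n + 1)) :=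
    fun _ _ => sub_le_iff_le_add
  rw [ZM_iter (ZM.dual f) (-c) j, (gc_dual f').l_unique ((gc_dual f).compose htrans) hc]
  simp only [Function.comp_apply]
  ring

theorem ZMrel.codual {f f' : ZM n m} (h : ZMrel n m f f') : ZMrel m n (codual f) (codual f') := by
  obtain ⟨c, hc⟩ := h
  refine ⟨-c, fun j => ?_⟩
  have htrans : GaloisConnection (· + c * (n + 1)) (· - c * (n + 1)) :=
    fun _ _ => le_sub_iff_add_le.symm
  rw [ZM_iter (ZM.codual f) (-c) j, (gc_codual f').u_unique (htrans.compose (gc_codual f)) hc]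
  simp only [Function.comp_apply]
  ring

def ZM.toHom (f : ZM n m) : @Quiver.Hom LambdaC _ n m := Quot.mk _ f

def dualFunctor : LambdaC ⥤ LambdaCᵒᵖ where
  obj n := Opposite.op n
  map f := Quiver.Hom.op (Quot.map ZM.dual (fun _ _ => ZMrel.dual) f)
  map_id n := congrArg (fun g => (ZM.toHom g).op) (dual_id n)
  map_comp f g := by
    rcases f with ⟨f⟩
    rcases g with ⟨g⟩
    exact congrArg (fun h => (ZM.toHom h).op) (dual_comp f g)

def codualFunctor : LambdaCᵒᵖ ⥤ LambdaC where
  obj n := n.unop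
  map f := Quot.map ZM.codual (fun _ _ => ZMrel.codual) f.unop
  map_id n := congrArg ZM.toHom (codual_id n.unop)
  map_comp f g := by
    rcases f with ⟨⟨f⟩⟩
    rcases g with ⟨⟨g⟩⟩
    exact congrArg ZM.toHom (codual_comp g f)

/-- The cyclic category is self-dual: `Λ_c` is isomorphic to its opposite category via an
isomorphism of categories that is the identity on objects. -/
theorem stmt_11 :
    ∃ (F : LambdaC ⥤ LambdaCᵒᵖ) (G : LambdaCᵒᵖ ⥤ LambdaC),
      F ⋙ G = Functor.id LambdaC ∧ G ⋙ F = Functor.id LambdaCᵒᵖ ∧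
      ∀ X : LambdaC, F.obj X = Opposite.op X := by
  refine ⟨dualFunctor, codualFunctor, CategoryTheory.Functor.hext (fun _ => rfl) ?_,
    CategoryTheory.Functor.hext (fun _ => rfl) ?_, fun _ => rfl⟩
  · rintro X Y ⟨f⟩
    exact heq_of_eq (congrArg ZM.toHom (codual_dual f))
  · rintro X Y ⟨⟨f⟩⟩
    exact heq_of_eq (congrArg (fun g => (ZM.toHom g).op) (dual_codual f))

end
end

section
/- Let n be a natural number and let f : ℤ → ℤ be a monotone function satisfying f(k + (n+1)) = f(k) + (n+1) for all k ∈ ℤ. If the induced map φ_f : ZMod (n+1) → ZMod (n+1) is a bijection, then f is a translation: there exists c ∈ ℤ such that f(k) = k + c for all k ∈ ℤ. (Consequently, for any i, j ∈ ZMod (n+1) there is a unique automorphism of ⟨n⟩ in the cyclic category Λ sending i to j.) -/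
/-!
Two integers with the same image under `f` have the same residue, because `φ_f` is injective;
if they were distinct they would lie at least `n + 1` apart, and equivariance would push their
values apart as well. Hence `f` is strictly monotone, so it increases by at least `1` at each
step. Since it increases by exactly `n + 1` over `n + 1` steps, every step is exactly `1`.
-/

theorem Int.add_le_of_intCast_eq_of_lt (N : ℕ) {a b : ℤ} (h : (a : ZMod N) = b) (hab : a < b) :
    a + N ≤ b := by
  have hdvd : (N : ℤ) ∣ b - a := (ZMod.intCast_eq_intCast_iff_dvd_sub a b N).1 h
  have := Int.le_of_dvd (sub_pos.2 hab) hdvd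
  omega

namespace StrictMono

variable {f : ℤ → ℤ}

theorem add_natCast_le (hf : StrictMono f) (k : ℤ) (m : ℕ) : f k + m ≤ f (k + m) := by
  induction m with
  | zero => simp
  | succ m ih =>
    have := hf (lt_add_one (k + m))
    push_cast
    rw [← add_assoc k]
    omega

theorem map_add_one_of_map_add_period (hf : StrictMono f) (n : ℕ)
    (heq : ∀ k : ℤ, f (k + (n + 1)) = f k + (n + 1)) (k : ℤ) : f (k + 1) = f k + 1 := by
  have hstep : f k < f (k + 1) := hf (lt_add_one k)
  have hrest : f (k + 1) + n ≤ f (k + 1 + n) := hf.add_natCast_le (k + 1) n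
  rw [add_assoc, add_comm 1 (n : ℤ), heq] at hrest
  omega

end StrictMono

theorem Monotone.strictMono_of_induced_injective {n : ℕ} {f : ℤ → ℤ} (hmono : Monotone f)
    (heq : ∀ k : ℤ, f (k + (n + 1)) = f k + (n + 1)) {φ : ZMod (n + 1) → ZMod (n + 1)}
    (hφ : ∀ k : ℤ, φ k = f k) (hinj : Function.Injective φ) : StrictMono f := by
  intro a b hab
  refine (hmono hab.le).lt_of_ne fun hfab => ?_
  have hres : (a : ZMod (n + 1)) = b := hinj (by rw [hφ, hφ, hfab])
  have hfar : a + (n + 1) ≤ b := by exact_mod_cast Int.add_le_of_intCast_eq_of_lt (n + 1) hres hab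
  have := hmono hfar
  rw [heq] at this
  omega

/-- Let `f : ℤ → ℤ` be monotone with `f(k + (n+1)) = f(k) + (n+1)` for all `k`. If the induced
map `φ_f : ℤ/(n+1) → ℤ/(n+1)` is a bijection, then `f` is a translation `k ↦ k + c`.
(Consequently, for any `i, j ∈ ℤ/(n+1)` there is a unique automorphism of `⟨n⟩` in the cyclic
category `Λ` sending `i` to `j`.) -/
theorem stmt_12 (n : ℕ) (f : ℤ → ℤ) (hmono : Monotone f)
    (heq : ∀ k : ℤ, f (k + (n + 1)) = f k + (n + 1))
    (φ : ZMod (n + 1) → ZMod (n + 1))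
    (hφ : ∀ k : ℤ, φ ((k : ZMod (n + 1))) = ((f k : ℤ) : ZMod (n + 1)))
    (hbij : Function.Bijective φ) :
    ∃ c : ℤ, ∀ k : ℤ, f k = k + c := by
  have hsm : StrictMono f := hmono.strictMono_of_induced_injective heq hφ hbij.injective
  let g : AddConstMap ℤ ℤ 1 1 := ⟨f, hsm.map_add_one_of_map_add_period n heq⟩
  refine ⟨f 0, fun k => ?_⟩
  have hk := AddConstMapClass.map_int_add g k 0
  rwa [Int.cast_id, add_zero, add_comm] at hk
end
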